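/- arXiv:1702.01203 — 7 statements merged into one kernel-verified Lean document; each statement's English description precedes it below -/
import Mathlib

section
/- Let (μ_n)_{n≥1} be a proper super-convolutive sequence with g_n(t) = (1/n) log ∑_j μ_n(j)e^{jt}, limit function Λ(t) = lim_n g_n(t), and γ = Λ(0) < ∞. Then g_1(t) ≤ Λ(t) ≤ max(γ, t + γ) for all real t, and Λ is convex and monotonically nondecreasing. -/
/-!
Write `Z_n(t) = ∑_j μ_n(j) e^{jt}`, so that `g_n = (1/n) log Z_n`. Multiplying out, super-convolutivity
gives `Z_m Z_n ≤ Z_{m+n}`, hence `Z_1^n ≤ Z_n` and `g_1 ≤ g_n`. Each `g_n` is nondecreasing, convex by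
Hölder's inequality, and satisfies `g_n(t) ≤ max(0, t) + g_n(0)` because only exponents `j ≤ n` occur.
These inequalities pass to the pointwise limit `Λ`; the two bounds make `Λ` finite, which is what
allows taking limits in the convexity inequality.
-/

open Filter
open scoped Topology BigOperators

open Finset Real

theorem ConvexOn.of_tendsto {ι E : Type*} [AddCommGroup E] [Module ℝ E] {s : Set E}
    {l : Filter ι} [l.NeBot] {f : ι → E → ℝ} {F : E → ℝ}
    (hf : ∀ᶠ i in l, ConvexOn ℝ s (f i)) (hF : ∀ x ∈ s, Tendsto (f · x) l (𝓝 (F x))) :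
    ConvexOn ℝ s F := by
  obtain ⟨i₀, hi₀⟩ := hf.exists
  refine ⟨hi₀.1, fun x hx y hy a b ha hb hab => ?_⟩
  exact le_of_tendsto_of_tendsto (hF _ (hi₀.1 hx hy ha hb hab))
    (((hF x hx).const_smul a).add ((hF y hy).const_smul b))
    (hf.mono fun i hi => hi.2 hx hy ha hb hab)

theorem Finset.sum_rpow_mul_rpow_le {ι : Type*} (s : Finset ι) {f g : ι → ℝ}
    (hf : ∀ i ∈ s, 0 ≤ f i) (hg : ∀ i ∈ s, 0 ≤ g i) (hF : 0 < ∑ i ∈ s, f i)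
    (hG : 0 < ∑ i ∈ s, g i) {a b : ℝ} (ha : 0 ≤ a) (hb : 0 ≤ b) (hab : a + b = 1) :
    ∑ i ∈ s, f i ^ a * g i ^ b ≤ (∑ i ∈ s, f i) ^ a * (∑ i ∈ s, g i) ^ b := by
  set F := ∑ i ∈ s, f i
  set G := ∑ i ∈ s, g i
  rw [← div_le_one (by positivity), sum_div]
  calc ∑ i ∈ s, f i ^ a * g i ^ b / (F ^ a * G ^ b)
      = ∑ i ∈ s, (f i / F) ^ a * (g i / G) ^ b := sum_congr rfl fun i hi => by
        rw [div_rpow (hf i hi) hF.le, div_rpow (hg i hi) hG.le, div_mul_div_comm]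
    _ ≤ ∑ i ∈ s, (a * (f i / F) + b * (g i / G)) := sum_le_sum fun i hi =>
        geom_mean_le_arith_mean2_weighted ha hb (div_nonneg (hf i hi) hF.le)
          (div_nonneg (hg i hi) hG.le) hab
    _ = 1 := by
        rw [sum_add_distrib, ← mul_sum, ← mul_sum, ← sum_div, ← sum_div, div_self hF.ne',
          div_self hG.ne', mul_one, mul_one, hab]

noncomputable def partitionFn (w : ℕ → ℝ) (n : ℕ) (t : ℝ) : ℝ :=
  ∑ j ∈ range (n + 1), w j * exp (j * t)

noncomputable def scaledLogPartition (μ : ℕ → ℕ → ℝ) (n : ℕ) (t : ℝ) : ℝ :=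
  (1 / (n : ℝ)) * log (partitionFn (μ n) n t)

section partitionFn

variable {w : ℕ → ℝ} {n : ℕ}

theorem partitionFn_nonneg (hw : ∀ j, 0 ≤ w j) (t : ℝ) : 0 ≤ partitionFn w n t :=
  sum_nonneg fun j _ => mul_nonneg (hw j) (exp_pos _).le

theorem partitionFn_pos (hw : ∀ j, 0 ≤ w j) (h0 : 0 < w 0) (t : ℝ) : 0 < partitionFn w n t :=
  sum_pos' (fun j _ => mul_nonneg (hw j) (exp_pos _).le)
    ⟨0, mem_range.2 n.succ_pos, mul_pos h0 (exp_pos _)⟩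

theorem partitionFn_mono (hw : ∀ j, 0 ≤ w j) : Monotone (partitionFn w n) := fun _ _ hst =>
  sum_le_sum fun j _ => mul_le_mul_of_nonneg_left
    (exp_le_exp.2 (mul_le_mul_of_nonneg_left hst j.cast_nonneg)) (hw j)

theorem partitionFn_le_exp_mul (hw : ∀ j, 0 ≤ w j) (t : ℝ) :
    partitionFn w n t ≤ exp (n * max 0 t) * partitionFn w n 0 := by
  rw [partitionFn, partitionFn, mul_sum]
  refine sum_le_sum fun j hj => ?_
  have hjn : (j : ℝ) ≤ n := by exact_mod_cast Nat.lt_succ_iff.1 (mem_range.1 hj)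
  have hexp : (j : ℝ) * t ≤ n * max 0 t :=
    (mul_le_mul_of_nonneg_left (le_max_right 0 t) j.cast_nonneg).trans
      (mul_le_mul_of_nonneg_right hjn (le_max_left 0 t))
  calc w j * exp (j * t) ≤ w j * exp (n * max 0 t) :=
        mul_le_mul_of_nonneg_left (exp_le_exp.2 hexp) (hw j)
    _ = exp (n * max 0 t) * (w j * exp (j * 0)) := by rw [mul_zero, exp_zero]; ring

theorem partitionFn_convexComb_le (hw : ∀ j, 0 ≤ w j) (h0 : 0 < w 0) (s t : ℝ) {a b : ℝ}
    (ha : 0 ≤ a) (hb : 0 ≤ b) (hab : a + b = 1) :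
    partitionFn w n (a * s + b * t) ≤ partitionFn w n s ^ a * partitionFn w n t ^ b := by
  have hterm : ∀ j : ℕ, w j * exp (j * (a * s + b * t))
      = (w j * exp (j * s)) ^ a * (w j * exp (j * t)) ^ b := fun j => by
    rw [mul_rpow (hw j) (exp_pos _).le, mul_rpow (hw j) (exp_pos _).le, ← exp_mul, ← exp_mul,
      mul_mul_mul_comm, ← rpow_add' (hw j) (by rw [hab]; exact one_ne_zero), hab, rpow_one,
      ← exp_add]
    ring_nf
  simp only [partitionFn, hterm]
  exact sum_rpow_mul_rpow_le _ (fun j _ => mul_nonneg (hw j) (exp_pos _).le)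
    (fun j _ => mul_nonneg (hw j) (exp_pos _).le) (partitionFn_pos hw h0 s)
    (partitionFn_pos hw h0 t) ha hb hab

/-- The convolution on the right also contains the products `v k * w (i - k)` with `k > m`, so no
support condition is needed. -/
theorem partitionFn_mul_le {v : ℕ → ℝ} {m : ℕ} (hv : ∀ j, 0 ≤ v j) (hw : ∀ j, 0 ≤ w j) (t : ℝ) :
    partitionFn v m t * partitionFn w n t ≤
      partitionFn (fun i => ∑ k ∈ range (i + 1), v k * w (i - k)) (m + n) t := by
  set f : ℕ × ℕ → ℝ := fun x => v x.1 * exp (x.1 * t) * (w x.2 * exp (x.2 * t))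
  have hf : ∀ x, 0 ≤ f x := fun x =>
    mul_nonneg (mul_nonneg (hv _) (exp_pos _).le) (mul_nonneg (hw _) (exp_pos _).le)
  have hdiag : ∀ i : ℕ, ∑ x ∈ antidiagonal i, f x =
      (∑ k ∈ range (i + 1), v k * w (i - k)) * exp (i * t) := fun i => by
    rw [Nat.sum_antidiagonal_eq_sum_range_succ_mk, sum_mul]
    refine sum_congr rfl fun k hk => ?_
    have hki : k ≤ i := Nat.lt_succ_iff.1 (mem_range.1 hk)
    simp only [f, mul_mul_mul_comm, ← exp_add, ← add_mul, ← Nat.cast_add, Nat.add_sub_cancel' hki]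
  have hmaps : ∀ x ∈ range (m + 1) ×ˢ range (n + 1), x.1 + x.2 ∈ range (m + n + 1) := by
    simp only [mem_product, mem_range]
    omega
  calc partitionFn v m t * partitionFn w n t
      = ∑ x ∈ range (m + 1) ×ˢ range (n + 1), f x := by
        rw [partitionFn, partitionFn, sum_mul_sum, sum_product]
    _ = ∑ i ∈ range (m + n + 1), ∑ x ∈ range (m + 1) ×ˢ range (n + 1) with x.1 + x.2 = i, f x :=
        (sum_fiberwise_of_maps_to hmaps f).symm
    _ ≤ ∑ i ∈ range (m + n + 1), ∑ x ∈ antidiagonal i, f x :=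
        sum_le_sum fun i _ => sum_le_sum_of_subset_of_nonneg
          (fun x hx => mem_antidiagonal.2 (mem_filter.1 hx).2) fun x _ _ => hf x
    _ = _ := sum_congr rfl fun i _ => hdiag i

end partitionFn

section SuperConvolutive

variable {μ : ℕ → ℕ → ℝ} {n : ℕ}

theorem scaledLogPartition_monotone (hw : ∀ j, 0 ≤ μ n j) (h0 : 0 < μ n 0) :
    Monotone (scaledLogPartition μ n) := fun _ _ hst =>
  mul_le_mul_of_nonneg_left
    (log_le_log (partitionFn_pos hw h0 _) (partitionFn_mono hw hst)) (by positivity)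

theorem scaledLogPartition_convexOn (hw : ∀ j, 0 ≤ μ n j) (h0 : 0 < μ n 0) :
    ConvexOn ℝ Set.univ (scaledLogPartition μ n) := by
  have hlog : ConvexOn ℝ Set.univ fun t => log (partitionFn (μ n) n t) := by
    refine ⟨convex_univ, fun s _ t _ a b ha hb hab => ?_⟩
    have hs : 0 < partitionFn (μ n) n s := partitionFn_pos hw h0 s
    have ht : 0 < partitionFn (μ n) n t := partitionFn_pos hw h0 t
    calc log (partitionFn (μ n) n (a • s + b • t))
        ≤ log (partitionFn (μ n) n s ^ a * partitionFn (μ n) n t ^ b) :=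
          log_le_log (partitionFn_pos hw h0 _) (partitionFn_convexComb_le hw h0 s t ha hb hab)
      _ = a • log (partitionFn (μ n) n s) + b • log (partitionFn (μ n) n t) := by
          rw [log_mul (rpow_pos_of_pos hs a).ne' (rpow_pos_of_pos ht b).ne', log_rpow hs,
            log_rpow ht, smul_eq_mul, smul_eq_mul]
  exact hlog.smul (by positivity)

theorem scaledLogPartition_le_max_add (hw : ∀ j, 0 ≤ μ n j) (h0 : 0 < μ n 0) (hn : 1 ≤ n)
    (t : ℝ) : scaledLogPartition μ n t ≤ max 0 t + scaledLogPartition μ n 0 := by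
  have hn' : (n : ℝ) ≠ 0 := by positivity
  calc scaledLogPartition μ n t
      ≤ (1 / (n : ℝ)) * log (exp (n * max 0 t) * partitionFn (μ n) n 0) :=
        mul_le_mul_of_nonneg_left (log_le_log (partitionFn_pos hw h0 t)
          (partitionFn_le_exp_mul hw t)) (by positivity)
    _ = max 0 t + scaledLogPartition μ n 0 := by
        rw [log_mul (exp_pos _).ne' (partitionFn_pos hw h0 0).ne', log_exp, scaledLogPartition]
        field_simp

theorem partitionFn_one_pow_le (hnonneg : ∀ n i, 0 ≤ μ n i)
    (hsup : ∀ m n : ℕ, 1 ≤ m → 1 ≤ n → ∀ i : ℕ,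
      ∑ k ∈ range (i + 1), μ m k * μ n (i - k) ≤ μ (m + n) i)
    (hn : 1 ≤ n) (t : ℝ) : partitionFn (μ 1) 1 t ^ n ≤ partitionFn (μ n) n t := by
  induction n, hn using Nat.le_induction with
  | base => rw [pow_one]
  | succ k hk ih =>
    calc partitionFn (μ 1) 1 t ^ (k + 1)
        = partitionFn (μ 1) 1 t ^ k * partitionFn (μ 1) 1 t := pow_succ _ _
      _ ≤ partitionFn (μ k) k t * partitionFn (μ 1) 1 t :=
          mul_le_mul_of_nonneg_right ih (partitionFn_nonneg (hnonneg 1) t)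
      _ ≤ partitionFn (fun i => ∑ j ∈ range (i + 1), μ k j * μ 1 (i - j)) (k + 1) t :=
          partitionFn_mul_le (hnonneg k) (hnonneg 1) t
      _ ≤ partitionFn (μ (k + 1)) (k + 1) t :=
          sum_le_sum fun i _ => mul_le_mul_of_nonneg_right (hsup k 1 hk le_rfl i) (exp_pos _).le

theorem scaledLogPartition_one_le (hnonneg : ∀ n i, 0 ≤ μ n i)
    (hsup : ∀ m n : ℕ, 1 ≤ m → 1 ≤ n → ∀ i : ℕ,
      ∑ k ∈ range (i + 1), μ m k * μ n (i - k) ≤ μ (m + n) i)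
    (h0 : 0 < μ 1 0) (hn : 1 ≤ n) (t : ℝ) :
    scaledLogPartition μ 1 t ≤ scaledLogPartition μ n t := by
  have h1 : 0 < partitionFn (μ 1) 1 t := partitionFn_pos (hnonneg 1) h0 t
  have hn' : (0 : ℝ) < n := by exact_mod_cast hn
  calc scaledLogPartition μ 1 t = (1 / (n : ℝ)) * log (partitionFn (μ 1) 1 t ^ n) := by
        rw [scaledLogPartition, log_pow, Nat.cast_one]; field_simp
    _ ≤ scaledLogPartition μ n t :=
        mul_le_mul_of_nonneg_left (log_le_log (pow_pos h1 n)
          (partitionFn_one_pow_le hnonneg hsup hn t)) (by positivity)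

end SuperConvolutive

theorem proper_superconvolutive_limit_properties_general
    (μ : ℕ → ℕ → ℝ)
    (hnonneg : ∀ n i, 0 ≤ μ n i)
    (hsup : ∀ m n : ℕ, 1 ≤ m → 1 ≤ n → ∀ i : ℕ,
      ∑ k ∈ Finset.range (i + 1), μ m k * μ n (i - k) ≤ μ (m + n) i)
    (hpos0 : ∀ n : ℕ, 1 ≤ n → 0 < μ n 0)
    (g : ℕ → ℝ → ℝ)
    (hg : ∀ n t, g n t =
      (1 / (n : ℝ)) * Real.log (∑ j ∈ Finset.range (n + 1), μ n j * Real.exp (j * t)))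
    (Λ : ℝ → EReal)
    (hΛ : ∀ t : ℝ, Tendsto (fun n : ℕ => ((g n t : ℝ) : EReal)) atTop (𝓝 (Λ t)))
    (γ : ℝ) (hγ : Λ 0 = (γ : EReal)) :
    (∀ t : ℝ, ((g 1 t : ℝ) : EReal) ≤ Λ t ∧ Λ t ≤ max ((γ : ℝ) : EReal) (((t + γ : ℝ)) : EReal)) ∧
    (∀ s t : ℝ, s ≤ t → Λ s ≤ Λ t) ∧
    (∀ s t a b : ℝ, 0 ≤ a → 0 ≤ b → a + b = 1 →
      Λ (a * s + b * t) ≤ (a : EReal) * Λ s + (b : EReal) * Λ t) := by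
  obtain rfl : g = scaledLogPartition μ := funext fun n => funext (hg n)
  have hlim0 : Tendsto (scaledLogPartition μ · 0) atTop (𝓝 γ) :=
    EReal.tendsto_coe.mp (hγ ▸ hΛ 0)
  have hlower (t : ℝ) : (scaledLogPartition μ 1 t : EReal) ≤ Λ t :=
    ge_of_tendsto (hΛ t) <| (eventually_ge_atTop 1).mono fun n hn =>
      EReal.coe_le_coe_iff.2 (scaledLogPartition_one_le hnonneg hsup (hpos0 1 le_rfl) hn t)
  have hupper (t : ℝ) : Λ t ≤ ((max 0 t + γ : ℝ) : EReal) :=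
    le_of_tendsto_of_tendsto (hΛ t) (EReal.tendsto_coe.2 (hlim0.const_add _)) <|
      (eventually_ge_atTop 1).mono fun n hn => EReal.coe_le_coe_iff.2
        (scaledLogPartition_le_max_add (hnonneg n) (hpos0 n hn) hn t)
  have hΛ_coe (t : ℝ) : Λ t = (Λ t).toReal :=
    (EReal.coe_toReal ((hupper t).trans_lt (EReal.coe_lt_top _)).ne
      ((EReal.bot_lt_coe _).trans_le (hlower t)).ne').symm
  have hconv : ConvexOn ℝ Set.univ fun t => (Λ t).toReal :=
    ConvexOn.of_tendsto ((eventually_ge_atTop 1).mono fun n hn =>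
      scaledLogPartition_convexOn (hnonneg n) (hpos0 n hn))
      fun t _ => EReal.tendsto_coe.mp (hΛ_coe t ▸ hΛ t)
  refine ⟨fun t => ⟨hlower t, (hupper t).trans_eq ?_⟩, fun s t hst => ?_,
    fun s t a b ha hb hab => ?_⟩
  · rw [← max_add_add_right, zero_add, EReal.coe_strictMono.monotone.map_max]
  · exact le_of_tendsto_of_tendsto (hΛ s) (hΛ t) <| (eventually_ge_atTop 1).mono fun n hn =>
      EReal.coe_le_coe_iff.2 (scaledLogPartition_monotone (hnonneg n) (hpos0 n hn) hst)
  · rw [hΛ_coe (a * s + b * t), hΛ_coe s, hΛ_coe t]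
    exact_mod_cast hconv.2 trivial trivial ha hb hab

/-- For a proper super-convolutive sequence, the limit function `Λ`
satisfies `g 1 t ≤ Λ(t) ≤ max(γ, t + γ)` for all `t`, and `Λ` is convex and
monotonically nondecreasing. -/
theorem proper_superconvolutive_limit_properties
    (μ : ℕ → ℕ → ℝ)
    (hnonneg : ∀ n i, 0 ≤ μ n i)
    (hzero : ∀ n i : ℕ, n + 1 ≤ i → μ n i = 0)
    (hsup : ∀ m n : ℕ, 1 ≤ m → 1 ≤ n → ∀ i : ℕ,
      ∑ k ∈ Finset.range (i + 1), μ m k * μ n (i - k) ≤ μ (m + n) i)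
    (hpos0 : ∀ n : ℕ, 1 ≤ n → 0 < μ n 0)
    (hposn : ∀ n : ℕ, 1 ≤ n → 0 < μ n n)
    (β : ℝ)
    (hβ : Tendsto (fun n : ℕ => (1 / (n : ℝ)) * Real.log (μ n 0)) atTop (𝓝 β))
    (g : ℕ → ℝ → ℝ)
    (hg : ∀ n t, g n t =
      (1 / (n : ℝ)) * Real.log (∑ j ∈ Finset.range (n + 1), μ n j * Real.exp (j * t)))
    (Λ : ℝ → EReal)
    (hΛ : ∀ t : ℝ, Tendsto (fun n : ℕ => ((g n t : ℝ) : EReal)) atTop (𝓝 (Λ t)))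
    (γ : ℝ) (hγ : Λ 0 = (γ : EReal)) :
    (∀ t : ℝ, ((g 1 t : ℝ) : EReal) ≤ Λ t ∧ Λ t ≤ max ((γ : ℝ) : EReal) (((t + γ : ℝ)) : EReal)) ∧
    (∀ s t : ℝ, s ≤ t → Λ s ≤ Λ t) ∧
    (∀ s t a b : ℝ, 0 ≤ a → 0 ≤ b → a + b = 1 →
      Λ (a * s + b * t) ≤ (a : EReal) * Λ s + (b : EReal) * Λ t) :=
  proper_superconvolutive_limit_properties_general μ hnonneg hsup hpos0 g hg Λ hΛ γ hγ
end

section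
/- Let (μ_n) be a proper super-convolutive sequence with limit function Λ as above. Then the convex conjugate Λ*(x) = sup_t (xt − Λ(t)) is finite exactly on [0,1], and Λ* is convex and continuous on [0,1]. -/
/-!
Keeping only the term `j = 0`, resp. `j = n`, of the sum defining `g n t`, and using
`μ n 0 ≥ μ 1 0 ^ n` and `μ n n ≥ μ 1 1 ^ n` (iterated super-convolutivity), gives
`max (log (μ 1 0)) (t + log (μ 1 1)) ≤ Λ t`; bounding `e^{jt}` by `e^{n max 0 t}` gives
`Λ t ≤ γ + max 0 t`. So `Λ` is real-valued, and `x t - Λ t` is bounded above in `t` when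
`x ∈ [0,1]`, while it tends to `+∞` as `t → +∞` if `x > 1` and as `t → -∞` if `x < 0`.
On `[0,1]` the conjugate is a supremum of affine functions, hence convex and lower
semicontinuous; a convex function on a segment lies below its chords, hence is upper
semicontinuous, so it is continuous.
-/

open Filter
open scoped Topology BigOperators

open Set

theorem EReal.iSup_coe_eq_top_of_not_bddAbove {ι : Sort*} {f : ι → ℝ}
    (hf : ¬BddAbove (range f)) : ⨆ i, (f i : EReal) = ⊤ := by
  refine EReal.eq_top_iff_forall_lt _ |>.2 fun y => ?_
  obtain ⟨_, ⟨i, rfl⟩, hi⟩ := not_bddAbove_iff.1 hf y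
  exact (EReal.coe_lt_coe_iff.2 hi).trans_le (le_iSup (fun i => (f i : EReal)) i)

theorem EReal.coe_iSup {ι : Sort*} [Nonempty ι] {f : ι → ℝ} (hf : BddAbove (range f)) :
    ((⨆ i, f i : ℝ) : EReal) = ⨆ i, (f i : EReal) :=
  Monotone.map_ciSup_of_continuousAt continuous_coe_real_ereal.continuousAt
    EReal.coe_strictMono.monotone hf

theorem convexOn_ciSup {ι : Sort*} [Nonempty ι] {E : Type*} [AddCommMonoid E] [Module ℝ E]
    {s : Set E} {f : ι → E → ℝ} (hf : ∀ i, ConvexOn ℝ s (f i))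
    (hbdd : ∀ x ∈ s, BddAbove (range fun i => f i x)) :
    ConvexOn ℝ s fun x => ⨆ i, f i x := by
  refine ⟨(hf (Classical.arbitrary ι)).1, fun x hx y hy a b ha hb hab => ciSup_le fun i => ?_⟩
  show f i (a • x + b • y) ≤ a * (⨆ i, f i x) + b * (⨆ i, f i y)
  calc f i (a • x + b • y) ≤ a * f i x + b * f i y := (hf i).2 hx hy ha hb hab
    _ ≤ a * (⨆ i, f i x) + b * (⨆ i, f i y) := by
      gcongr
      exacts [le_ciSup (hbdd x hx) i, le_ciSup (hbdd y hy) i]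

theorem upperSemicontinuousWithinAt_of_le_of_continuousWithinAt {α : Type*}
    [TopologicalSpace α] {f h : α → ℝ} {s : Set α} {x : α} (hh : ContinuousWithinAt h s x)
    (hle : ∀ y ∈ s, f y ≤ h y) (hx : h x ≤ f x) : UpperSemicontinuousWithinAt f s x := by
  intro r hr
  filter_upwards [hh (eventually_lt_nhds (hx.trans_lt hr)), self_mem_nhdsWithin] with y hy hys
  exact (hle y hys).trans_lt hy

theorem ConvexOn.le_add_mul_slope {s : Set ℝ} {f : ℝ → ℝ} (hf : ConvexOn ℝ s f) {x e y : ℝ}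
    (hx : x ∈ s) (he : e ∈ s) (hy : y ∈ segment ℝ x e) :
    f y ≤ f x + (y - x) * slope f x e := by
  obtain ⟨a, b, ha, hb, hab, rfl⟩ := hy
  rcases eq_or_ne e x with rfl | hex
  · rw [← add_smul, hab, one_smul]
    simp
  obtain rfl : a = 1 - b := by linarith
  have hslope : ((1 - b) • x + b • e - x) * slope f x e = b * (f e - f x) := by
    rw [slope_def_field, smul_eq_mul, smul_eq_mul]
    field_simp [sub_ne_zero.2 hex]
    ring
  rw [hslope]
  calc f ((1 - b) • x + b • e) ≤ (1 - b) * f x + b * f e := hf.2 hx he ha hb hab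
    _ = f x + b * (f e - f x) := by ring

-- The chord through `x` and `e` is a continuous majorant of `f` on the segment, touching it at `x`.
theorem ConvexOn.continuousWithinAt_segment {s : Set ℝ} {f : ℝ → ℝ} (hf : ConvexOn ℝ s f)
    (hlsc : LowerSemicontinuousOn f s) {x e : ℝ} (hx : x ∈ s) (he : e ∈ s) :
    ContinuousWithinAt f (segment ℝ x e) x := by
  refine continuousWithinAt_iff_lower_upperSemicontinuousWithinAt.2
    ⟨(hlsc x hx).mono (hf.1.segment_subset hx he), ?_⟩
  exact upperSemicontinuousWithinAt_of_le_of_continuousWithinAt (by fun_prop)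
    (fun y hy => hf.le_add_mul_slope hx he hy) (by simp)

theorem ConvexOn.continuousOn_Icc_of_lowerSemicontinuousOn {f : ℝ → ℝ} {a b : ℝ}
    (hf : ConvexOn ℝ (Icc a b) f) (hlsc : LowerSemicontinuousOn f (Icc a b)) :
    ContinuousOn f (Icc a b) := by
  intro x hx
  have hab : a ≤ b := hx.1.trans hx.2
  refine ((hf.continuousWithinAt_segment hlsc hx (left_mem_Icc.2 hab)).union
    (hf.continuousWithinAt_segment hlsc hx (right_mem_Icc.2 hab))).mono fun y hy => ?_
  rw [segment_eq_uIcc, segment_eq_uIcc, mem_union, mem_uIcc, mem_uIcc]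
  rcases le_total y x with h | h
  exacts [Or.inl (Or.inr ⟨hy.1, h⟩), Or.inr (Or.inl ⟨h, hy.2⟩)]

def IsSuperConvolutive (μ : ℕ → ℕ → ℝ) : Prop :=
  ∀ m n : ℕ, 1 ≤ m → 1 ≤ n → ∀ i : ℕ,
    ∑ k ∈ Finset.range (i + 1), μ m k * μ n (i - k) ≤ μ (m + n) i

noncomputable def scaledLogMGF (μ : ℕ → ℕ → ℝ) (n : ℕ) (t : ℝ) : ℝ :=
  (1 / (n : ℝ)) * Real.log (∑ j ∈ Finset.range (n + 1), μ n j * Real.exp (j * t))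

theorem pow_le_of_mul_le_succ {a : ℕ → ℝ} (ha : 0 ≤ a 1)
    (hmul : ∀ m, 1 ≤ m → a 1 * a m ≤ a (m + 1)) {n : ℕ} (hn : 1 ≤ n) : a 1 ^ n ≤ a n := by
  induction n, hn using Nat.le_induction with
  | base => simp
  | succ m hm ih =>
    calc a 1 ^ (m + 1) = a 1 * a 1 ^ m := pow_succ' _ _
      _ ≤ a 1 * a m := by gcongr
      _ ≤ a (m + 1) := hmul m hm

namespace IsSuperConvolutive

variable {μ : ℕ → ℕ → ℝ}

theorem mul_le_succ_zero (hμ : IsSuperConvolutive μ) {m : ℕ} (hm : 1 ≤ m) :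
    μ 1 0 * μ m 0 ≤ μ (m + 1) 0 := by
  simpa [add_comm] using hμ 1 m le_rfl hm 0

theorem mul_le_succ_diag (hμ : IsSuperConvolutive μ) (hnonneg : ∀ n i, 0 ≤ μ n i) {m : ℕ}
    (hm : 1 ≤ m) :
    μ 1 1 * μ m m ≤ μ (m + 1) (m + 1) := by
  calc μ 1 1 * μ m m = μ 1 1 * μ m (m + 1 - 1) := by simp
    _ ≤ ∑ k ∈ Finset.range (m + 1 + 1), μ 1 k * μ m (m + 1 - k) :=
      Finset.single_le_sum (f := fun k => μ 1 k * μ m (m + 1 - k))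
        (fun k _ => mul_nonneg (hnonneg 1 k) (hnonneg m _)) (by simp)
    _ ≤ μ (m + 1) (m + 1) := by simpa [add_comm] using hμ 1 m le_rfl hm (m + 1)

end IsSuperConvolutive

section scaledLogMGF

variable {μ : ℕ → ℕ → ℝ} {n : ℕ}

theorem log_add_le_scaledLogMGF (hnonneg : ∀ j, 0 ≤ μ n j) (hn : 1 ≤ n) {j : ℕ} (hj : j ≤ n)
    {c : ℝ} (hc : 0 < c) (hcμ : c ^ n ≤ μ n j) (t : ℝ) :
    Real.log c + j / n * t ≤ scaledLogMGF μ n t := by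
  have hn' : (0 : ℝ) < n := by exact_mod_cast hn
  have hterm : c ^ n * Real.exp (j * t) ≤ ∑ i ∈ Finset.range (n + 1), μ n i * Real.exp (i * t) :=
    calc c ^ n * Real.exp (j * t) ≤ μ n j * Real.exp (j * t) := by gcongr
      _ ≤ _ := Finset.single_le_sum (f := fun i => μ n i * Real.exp (i * t))
        (fun i _ => mul_nonneg (hnonneg i) (Real.exp_pos _).le)
        (Finset.mem_range.2 (Nat.lt_succ_of_le hj))
  have hlog := Real.log_le_log (by positivity) hterm
  rw [Real.log_mul (by positivity) (Real.exp_pos _).ne', Real.log_pow, Real.log_exp] at hlog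
  rw [scaledLogMGF]
  calc Real.log c + j / n * t = 1 / n * (n * Real.log c + j * t) := by field_simp
    _ ≤ _ := by gcongr

theorem scaledLogMGF_le (hnonneg : ∀ j, 0 ≤ μ n j) (hn : 1 ≤ n) (hpos : 0 < μ n 0) (t : ℝ) :
    scaledLogMGF μ n t ≤ scaledLogMGF μ n 0 + max 0 t := by
  have hn' : (0 : ℝ) < n := by exact_mod_cast hn
  have hSpos : ∀ s, 0 < ∑ i ∈ Finset.range (n + 1), μ n i * Real.exp (i * s) := fun s =>
    Finset.sum_pos' (fun i _ => mul_nonneg (hnonneg i) (Real.exp_pos _).le)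
      ⟨0, by simp, by simpa using hpos⟩
  have hS : ∑ i ∈ Finset.range (n + 1), μ n i * Real.exp (i * t) ≤
      (∑ i ∈ Finset.range (n + 1), μ n i * Real.exp (i * 0)) * Real.exp (n * max 0 t) := by
    rw [Finset.sum_mul]
    refine Finset.sum_le_sum fun i hi => ?_
    have hin : (i : ℝ) ≤ n := by exact_mod_cast Nat.lt_succ_iff.1 (Finset.mem_range.1 hi)
    have : (i : ℝ) * t ≤ n * max 0 t :=
      (mul_le_mul_of_nonneg_left (le_max_right 0 t) i.cast_nonneg).trans
        (mul_le_mul_of_nonneg_right hin (le_max_left 0 t))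
    simpa using mul_le_mul_of_nonneg_left (Real.exp_le_exp.2 this) (hnonneg i)
  have hlog := Real.log_le_log (hSpos t) hS
  rw [Real.log_mul (hSpos 0).ne' (Real.exp_pos _).ne', Real.log_exp] at hlog
  rw [scaledLogMGF, scaledLogMGF]
  calc _ ≤ 1 / (n : ℝ) * (Real.log (∑ i ∈ Finset.range (n + 1), μ n i * Real.exp (i * 0)) +
        n * max 0 t) := by gcongr
    _ = _ := by rw [mul_add, ← mul_assoc, one_div_mul_cancel hn'.ne', one_mul]

end scaledLogMGF

theorem IsSuperConvolutive.max_log_le_of_tendsto_scaledLogMGF {μ : ℕ → ℕ → ℝ}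
    (hμ : IsSuperConvolutive μ) (hnonneg : ∀ n i, 0 ≤ μ n i) (h10 : 0 < μ 1 0) (h11 : 0 < μ 1 1)
    {t : ℝ} {l : EReal}
    (hl : Tendsto (fun n => (scaledLogMGF μ n t : EReal)) atTop (𝓝 l)) :
    ((max (Real.log (μ 1 0)) (t + Real.log (μ 1 1)) : ℝ) : EReal) ≤ l := by
  refine ge_of_tendsto hl (eventually_atTop.2 ⟨1, fun n hn => EReal.coe_le_coe_iff.2 ?_⟩)
  refine max_le ?_ ?_
  · simpa using log_add_le_scaledLogMGF (hnonneg n) hn (Nat.zero_le n) h10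
      (pow_le_of_mul_le_succ (a := fun m => μ m 0) h10.le
        (fun m hm => hμ.mul_le_succ_zero hm) hn) t
  · have hnn : (n : ℝ) / n = 1 := div_self (by positivity)
    simpa [hnn, add_comm] using log_add_le_scaledLogMGF (hnonneg n) hn le_rfl h11
      (pow_le_of_mul_le_succ (a := fun m => μ m m) h11.le
        (fun m hm => hμ.mul_le_succ_diag hnonneg hm) hn) t

theorem le_add_max_of_tendsto_scaledLogMGF {μ : ℕ → ℕ → ℝ} (hnonneg : ∀ n i, 0 ≤ μ n i)
    (hpos : ∀ n, 1 ≤ n → 0 < μ n 0) {γ t : ℝ} {l : EReal}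
    (hl : Tendsto (fun n => (scaledLogMGF μ n t : EReal)) atTop (𝓝 l))
    (hγ : Tendsto (fun n => scaledLogMGF μ n 0) atTop (𝓝 γ)) :
    l ≤ ((γ + max 0 t : ℝ) : EReal) :=
  le_of_tendsto_of_tendsto hl (EReal.tendsto_coe.2 (hγ.add_const _)) <|
    eventually_atTop.2 ⟨1, fun n hn =>
      EReal.coe_le_coe_iff.2 (scaledLogMGF_le (hnonneg n) hn (hpos n hn) t)⟩

section ConvexConjugate

variable {L : ℝ → ℝ} {a b c x : ℝ}

theorem bddAbove_range_mul_sub (hL : ∀ t, max b (t + a) ≤ L t) (hx : x ∈ Icc (0 : ℝ) 1) :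
    BddAbove (range fun t => x * t - L t) := by
  refine ⟨max (-a) (-b), forall_mem_range.2 fun t => ?_⟩
  have := hL t
  rcases le_total 0 t with ht | ht
  · nlinarith [le_max_left (-a) (-b), le_max_right b (t + a), hx.2]
  · nlinarith [le_max_right (-a) (-b), le_max_left b (t + a), hx.1]

theorem tendsto_mul_sub_atTop (hL : ∀ t, L t ≤ c + max 0 t) (hx : 1 < x) :
    Tendsto (fun t => x * t - L t) atTop atTop := by
  refine tendsto_atTop_mono' _ ?_ <|
    tendsto_atTop_add_const_right _ (-c) (tendsto_id.const_mul_atTop (sub_pos.2 hx))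
  filter_upwards [eventually_ge_atTop 0] with t ht
  have := hL t
  rw [max_eq_right ht] at this
  simp only [id]
  linarith

theorem tendsto_mul_sub_atBot (hL : ∀ t, L t ≤ c + max 0 t) (hx : x < 0) :
    Tendsto (fun t => x * t - L t) atBot atTop := by
  refine tendsto_atTop_mono' _ ?_ <|
    tendsto_atTop_add_const_right _ (-c) (tendsto_id.const_mul_atBot_of_neg hx)
  filter_upwards [eventually_le_atBot 0] with t ht
  have := hL t
  rw [max_eq_left ht] at this
  simp only [id]
  linarith

theorem not_bddAbove_range_mul_sub (hL : ∀ t, L t ≤ c + max 0 t) (hx : x ∉ Icc (0 : ℝ) 1) :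
    ¬BddAbove (range fun t => x * t - L t) := by
  rcases not_and_or.1 hx with hx | hx
  · exact not_bddAbove_of_tendsto_atTop (tendsto_mul_sub_atBot hL (not_le.1 hx))
  · exact not_bddAbove_of_tendsto_atTop (tendsto_mul_sub_atTop hL (not_le.1 hx))

theorem convexOn_iSup_mul_sub (hL : ∀ t, max b (t + a) ≤ L t) :
    ConvexOn ℝ (Icc 0 1) fun x => ⨆ t, (x * t - L t) :=
  convexOn_ciSup (fun t => ((LinearMap.mulRight ℝ t).convexOn (convex_Icc 0 1)).sub
    (concaveOn_const _ (convex_Icc 0 1))) fun _ => bddAbove_range_mul_sub hL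

theorem continuousOn_iSup_mul_sub (hL : ∀ t, max b (t + a) ≤ L t) :
    ContinuousOn (fun x => ⨆ t, (x * t - L t)) (Icc 0 1) :=
  (convexOn_iSup_mul_sub hL).continuousOn_Icc_of_lowerSemicontinuousOn <|
    lowerSemicontinuousOn_ciSup (fun _ => bddAbove_range_mul_sub hL) fun _ =>
      (continuous_id.mul continuous_const |>.sub continuous_const).lowerSemicontinuous
        |>.lowerSemicontinuousOn _

theorem toReal_iSup_coe_mul_sub (hL : ∀ t, max b (t + a) ≤ L t) (hx : x ∈ Icc (0 : ℝ) 1) :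
    (⨆ t, ((x * t - L t : ℝ) : EReal)).toReal = ⨆ t, (x * t - L t) := by
  rw [← EReal.coe_iSup (bddAbove_range_mul_sub hL hx), EReal.toReal_coe]

theorem iSup_coe_mul_sub_finite_iff (hL₀ : ∀ t, max b (t + a) ≤ L t)
    (hL₁ : ∀ t, L t ≤ c + max 0 t) :
    (⨆ t, ((x * t - L t : ℝ) : EReal)) ≠ ⊤ ∧ (⨆ t, ((x * t - L t : ℝ) : EReal)) ≠ ⊥ ↔
      x ∈ Icc (0 : ℝ) 1 := by
  refine ⟨fun hfin => ?_, fun hx => ?_⟩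
  · by_contra hx
    exact hfin.1 (EReal.iSup_coe_eq_top_of_not_bddAbove (not_bddAbove_range_mul_sub hL₁ hx))
  · rw [← EReal.coe_iSup (bddAbove_range_mul_sub hL₀ hx)]
    exact ⟨EReal.coe_ne_top _, EReal.coe_ne_bot _⟩

end ConvexConjugate

theorem conjugate_of_limit_function_general
    (μ : ℕ → ℕ → ℝ)
    (hnonneg : ∀ n i, 0 ≤ μ n i)
    (hsup : ∀ m n : ℕ, 1 ≤ m → 1 ≤ n → ∀ i : ℕ,
      ∑ k ∈ Finset.range (i + 1), μ m k * μ n (i - k) ≤ μ (m + n) i)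
    (hpos0 : ∀ n : ℕ, 1 ≤ n → 0 < μ n 0)
    (hposn : ∀ n : ℕ, 1 ≤ n → 0 < μ n n)
    (g : ℕ → ℝ → ℝ)
    (hg : ∀ n t, g n t =
      (1 / (n : ℝ)) * Real.log (∑ j ∈ Finset.range (n + 1), μ n j * Real.exp (j * t)))
    (Λ : ℝ → EReal)
    (hΛ : ∀ t : ℝ, Tendsto (fun n : ℕ => ((g n t : ℝ) : EReal)) atTop (𝓝 (Λ t)))
    (γ : ℝ) (hγ : Λ 0 = (γ : EReal))
    (Λstar : ℝ → EReal)
    (hΛstar : ∀ x : ℝ, Λstar x = ⨆ t : ℝ, (((x * t : ℝ) : EReal) - Λ t)) :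
    (∀ x : ℝ, (Λstar x ≠ ⊤ ∧ Λstar x ≠ ⊥) ↔ x ∈ Set.Icc (0 : ℝ) 1) ∧
    ConvexOn ℝ (Set.Icc (0 : ℝ) 1) (fun x => (Λstar x).toReal) ∧
    ContinuousOn (fun x => (Λstar x).toReal) (Set.Icc (0 : ℝ) 1) := by
  obtain rfl : g = scaledLogMGF μ := funext fun n => funext (hg n)
  have hlow t := IsSuperConvolutive.max_log_le_of_tendsto_scaledLogMGF hsup hnonneg (hpos0 1 le_rfl)
    (hposn 1 le_rfl) (hΛ t)
  have hup t := le_add_max_of_tendsto_scaledLogMGF hnonneg hpos0 (hΛ t)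
    (EReal.tendsto_coe.1 (hγ ▸ hΛ 0))
  set L : ℝ → ℝ := fun t => (Λ t).toReal
  have hΛL t : Λ t = L t := (EReal.coe_toReal ((hup t).trans_lt (EReal.coe_lt_top _)).ne
    ((EReal.bot_lt_coe _).trans_le (hlow t)).ne').symm
  have hL₀ t := EReal.coe_le_coe_iff.1 (hΛL t ▸ hlow t)
  have hL₁ t := EReal.coe_le_coe_iff.1 (hΛL t ▸ hup t)
  obtain rfl : Λstar = fun x => ⨆ t, ((x * t - L t : ℝ) : EReal) := by
    ext1 x
    simp only [hΛstar, hΛL, EReal.coe_sub]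
  have hreal : EqOn (fun x => ⨆ t, (x * t - L t))
      (fun x => (⨆ t, ((x * t - L t : ℝ) : EReal)).toReal) (Icc 0 1) :=
    fun _ hx => (toReal_iSup_coe_mul_sub hL₀ hx).symm
  exact ⟨fun _ => iSup_coe_mul_sub_finite_iff hL₀ hL₁, (convexOn_iSup_mul_sub hL₀).congr hreal,
    (continuousOn_iSup_mul_sub hL₀).congr hreal.symm⟩

/-- For a proper super-convolutive sequence with limit function `Λ`,
the convex conjugate `Λ*(x) = sup_t (xt − Λ(t))` is finite exactly on `[0,1]`,
and (as a real-valued function there) it is convex and continuous on `[0,1]`. -/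
theorem conjugate_of_limit_function
    (μ : ℕ → ℕ → ℝ)
    (hnonneg : ∀ n i, 0 ≤ μ n i)
    (hzero : ∀ n i : ℕ, n + 1 ≤ i → μ n i = 0)
    (hsup : ∀ m n : ℕ, 1 ≤ m → 1 ≤ n → ∀ i : ℕ,
      ∑ k ∈ Finset.range (i + 1), μ m k * μ n (i - k) ≤ μ (m + n) i)
    (hpos0 : ∀ n : ℕ, 1 ≤ n → 0 < μ n 0)
    (hposn : ∀ n : ℕ, 1 ≤ n → 0 < μ n n)
    (β : ℝ)
    (hβ : Tendsto (fun n : ℕ => (1 / (n : ℝ)) * Real.log (μ n 0)) atTop (𝓝 β))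
    (g : ℕ → ℝ → ℝ)
    (hg : ∀ n t, g n t =
      (1 / (n : ℝ)) * Real.log (∑ j ∈ Finset.range (n + 1), μ n j * Real.exp (j * t)))
    (Λ : ℝ → EReal)
    (hΛ : ∀ t : ℝ, Tendsto (fun n : ℕ => ((g n t : ℝ) : EReal)) atTop (𝓝 (Λ t)))
    (γ : ℝ) (hγ : Λ 0 = (γ : EReal))
    (Λstar : ℝ → EReal)
    (hΛstar : ∀ x : ℝ, Λstar x = ⨆ t : ℝ, (((x * t : ℝ) : EReal) - Λ t)) :
    (∀ x : ℝ, (Λstar x ≠ ⊤ ∧ Λstar x ≠ ⊥) ↔ x ∈ Set.Icc (0 : ℝ) 1) ∧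
    ConvexOn ℝ (Set.Icc (0 : ℝ) 1) (fun x => (Λstar x).toReal) ∧
    ContinuousOn (fun x => (Λstar x).toReal) (Set.Icc (0 : ℝ) 1) :=
  conjugate_of_limit_function_general μ hnonneg hsup hpos0 hposn g hg Λ hΛ γ hγ Λstar hΛstar
end

section
/- Let (f_n) be a sequence of continuous convex functions on a closed interval [a,b] converging pointwise to a continuous function f on [a,b]. Then f_n converges to f uniformly on [a,b]. -/
/-!
A convex function is squeezed by its values on a finite mesh: on a segment `[p, q]` it lies
below `max (φ p) (φ q)`, and beyond `p` on the side away from `q`, at distance at most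
`dist q p`, it lies above `min (φ p) (2 φ p - φ q)`. On a mesh of `[a, b]` fine enough that
`g` oscillates by less than `ε` between neighbouring points, both bounds are within `O(ε)`
of `g` as soon as `f n` is `ε`-close to `g` at the finitely many mesh points, which happens
eventually by pointwise convergence.
-/

open Filter Set
open scoped Topology

section

variable {E : Type*} [NormedAddCommGroup E] [NormedSpace ℝ E]

theorem ConvexOn.min_le_of_mem_segment {s : Set E} {φ : E → ℝ} (hφ : ConvexOn ℝ s φ)
    {x p q : E} (hx : x ∈ s) (hq : q ∈ s) (hp : p ∈ segment ℝ x q) (hpx : dist p x ≤ dist q p) :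
    min (φ p) (2 * φ p - φ q) ≤ φ x := by
  obtain ⟨α, β, hα, hβ, hαβ, rfl⟩ := hp
  rcases eq_or_ne x q with rfl | hxq
  · rw [Convex.combo_self hαβ]
    exact min_le_left _ _
  have hβα : β ≤ α := by
    obtain rfl : α = 1 - β := by linarith
    have hpx' : dist ((1 - β) • x + β • q) x = β * dist q x := by
      rw [show (1 - β) • x + β • q = x + β • (q - x) by module, dist_eq_norm,
        add_sub_cancel_left, norm_smul, Real.norm_of_nonneg hβ, dist_eq_norm]
    have hqp : dist q ((1 - β) • x + β • q) = (1 - β) * dist q x := by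
      rw [show (1 - β) • x + β • q = q - (1 - β) • (q - x) by module, dist_eq_norm,
        sub_sub_cancel, norm_smul, Real.norm_of_nonneg hα, dist_eq_norm]
    rw [hpx', hqp] at hpx
    exact le_of_mul_le_mul_right hpx (dist_pos.2 hxq.symm)
  set p := α • x + β • q
  have hchord : α * (φ p - φ x) ≤ β * (φ q - φ p) := by
    have := hφ.2 hx hq hα hβ hαβ
    simp only [smul_eq_mul] at this
    linear_combination this + φ p * hαβ
  rw [min_le_iff]
  rcases le_total (φ q) (φ p) with hle | hle
  · left
    nlinarith [mul_nonpos_of_nonneg_of_nonpos hβ (sub_nonpos.2 hle)]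
  · right
    nlinarith [mul_le_mul_of_nonneg_right hβα (sub_nonneg.2 hle)]

structure IsConvexMesh (S s : Set E) (h : ℝ) : Prop where
  subset : S ⊆ s
  interpolate : ∀ x ∈ s, ∃ p ∈ S, ∃ q ∈ S, x ∈ segment ℝ p q ∧ dist p x ≤ h ∧ dist q x ≤ h
  extrapolate : ∀ x ∈ s, ∃ p ∈ S, ∃ q ∈ S, p ∈ segment ℝ x q ∧ dist p x ≤ dist q p ∧ dist q p ≤ h

theorem IsConvexMesh.mono {S s : Set E} {h h' : ℝ} (hS : IsConvexMesh S s h) (hh : h ≤ h') :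
    IsConvexMesh S s h' where
  subset := hS.subset
  interpolate x hx := by
    obtain ⟨p, hp, q, hq, hxpq, hpx, hqx⟩ := hS.interpolate x hx
    exact ⟨p, hp, q, hq, hxpq, hpx.trans hh, hqx.trans hh⟩
  extrapolate x hx := by
    obtain ⟨p, hp, q, hq, hpxq, hpx, hqp⟩ := hS.extrapolate x hx
    exact ⟨p, hp, q, hq, hpxq, hpx, hqp.trans hh⟩

theorem IsConvexMesh.image_const_add_smul {S s : Set E} {h : ℝ} (hS : IsConvexMesh S s h)
    (c : E) {δ : ℝ} (hδ : 0 ≤ δ) :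
    IsConvexMesh ((c + δ • ·) '' S) ((c + δ • ·) '' s) (δ * h) := by
  have hdist (x y : E) : dist (c + δ • x) (c + δ • y) = δ * dist x y := by
    rw [dist_add_left, dist_smul₀, Real.norm_of_nonneg hδ]
  have hseg {x p q : E} (hx : x ∈ segment ℝ p q) :
      c + δ • x ∈ segment ℝ (c + δ • p) (c + δ • q) := by
    obtain ⟨α, β, hα, hβ, hαβ, rfl⟩ := hx
    exact ⟨α, β, hα, hβ, hαβ, by linear_combination (norm := module) hαβ • c⟩
  refine ⟨image_mono hS.subset, ?_, ?_⟩
  · rintro _ ⟨x, hx, rfl⟩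
    obtain ⟨p, hp, q, hq, hxpq, hpx, hqx⟩ := hS.interpolate x hx
    refine ⟨_, mem_image_of_mem _ hp, _, mem_image_of_mem _ hq, hseg hxpq, ?_, ?_⟩ <;>
      rw [hdist] <;> gcongr
  · rintro _ ⟨x, hx, rfl⟩
    obtain ⟨p, hp, q, hq, hpxq, hpx, hqp⟩ := hS.extrapolate x hx
    refine ⟨_, mem_image_of_mem _ hp, _, mem_image_of_mem _ hq, hseg hpxq, ?_, ?_⟩ <;>
      simp only [hdist] <;> gcongr

theorem isConvexMesh_self {s : Set E} {h : ℝ} (hh : 0 ≤ h) : IsConvexMesh s s h where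
  subset := subset_rfl
  interpolate x hx := ⟨x, hx, x, hx, left_mem_segment ℝ x x, by simpa using hh, by simpa using hh⟩
  extrapolate x hx := ⟨x, hx, x, hx, left_mem_segment ℝ x x, le_rfl, by simpa using hh⟩

theorem IsConvexMesh.dist_le {S s : Set E} {h e : ℝ} (hS : IsConvexMesh S s h) {φ g : E → ℝ}
    (hφ : ConvexOn ℝ s φ) (hφg : ∀ p ∈ S, dist (φ p) (g p) ≤ e)
    (hg : ∀ y ∈ s, ∀ z ∈ s, dist y z ≤ h → dist (g y) (g z) ≤ e) {x : E} (hx : x ∈ s) :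
    dist (φ x) (g x) ≤ 5 * e := by
  have hφg' (p) (hp : p ∈ S) := abs_le.1 (hφg p hp)
  have hg' (y) (hy : y ∈ s) (z) (hz : z ∈ s) (hyz : dist y z ≤ h) := abs_le.1 (hg y hy z hz hyz)
  rw [Real.dist_eq, abs_le]
  constructor
  · obtain ⟨p, hp, q, hq, hpxq, hpx, hqp⟩ := hS.extrapolate x hx
    have hmin := hφ.min_le_of_mem_segment hx (hS.subset hq) hpxq hpx
    have := hφg' p hp
    have := hφg' q hq
    have := hg' p (hS.subset hp) x hx (hpx.trans hqp)
    have := hg' q (hS.subset hq) p (hS.subset hp) hqp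
    rcases min_le_iff.1 hmin with h | h <;> linarith
  · obtain ⟨p, hp, q, hq, hxpq, hpx, hqx⟩ := hS.interpolate x hx
    have hmax := hφ.le_on_segment (hS.subset hp) (hS.subset hq) hxpq
    have := hφg' p hp
    have := hφg' q hq
    have := hg' p (hS.subset hp) x hx hpx
    have := hg' q (hS.subset hq) x hx hqx
    rcases le_max_iff.1 hmax with h | h <;> linarith

theorem tendstoUniformlyOn_of_convexOn {ι : Type*} {l : Filter ι} {F : ι → E → ℝ} {g : E → ℝ}
    {s : Set E} (hmesh : ∀ h > 0, ∃ S : Set E, S.Finite ∧ IsConvexMesh S s h)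
    (hF : ∀ i, ConvexOn ℝ s (F i)) (hg : UniformContinuousOn g s)
    (hFg : ∀ x ∈ s, Tendsto (fun i => F i x) l (𝓝 (g x))) : TendstoUniformlyOn F g l s := by
  rw [Metric.tendstoUniformlyOn_iff]
  intro ε hε
  obtain ⟨h, hh, hgh⟩ := Metric.uniformContinuousOn_iff_le.1 hg (ε / 6) (by positivity)
  obtain ⟨S, hSfin, hS⟩ := hmesh h hh
  have hclose : ∀ᶠ i in l, ∀ p ∈ S, dist (F i p) (g p) ≤ ε / 6 :=
    hSfin.eventually_all.2 fun p hp =>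
      (hFg p (hS.subset hp)).eventually (Metric.closedBall_mem_nhds _ (by positivity))
  filter_upwards [hclose] with i hi x hx
  rw [dist_comm]
  linarith [hS.dist_le (hF i) hi hgh hx]

end

theorem isConvexMesh_natCast_Icc {m : ℕ} (hm : 2 ≤ m) :
    IsConvexMesh (((↑) : ℕ → ℝ) '' Iic m) (Icc 0 m) 1 := by
  refine ⟨?_, fun r ⟨hr₀, hrm⟩ => ?_, fun r ⟨hr₀, hrm⟩ => ?_⟩
  · rintro _ ⟨i, hi, rfl⟩
    exact ⟨i.cast_nonneg, by exact_mod_cast mem_Iic.1 hi⟩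
  · have hceil : ⌈r⌉₊ ≤ m := Nat.ceil_le.2 hrm
    refine ⟨_, ⟨⌊r⌋₊, (Nat.floor_le_ceil r).trans hceil, rfl⟩, _, ⟨⌈r⌉₊, hceil, rfl⟩,
      ?_, ?_, ?_⟩
    · rw [segment_eq_uIcc, mem_uIcc]
      exact Or.inl ⟨Nat.floor_le hr₀, Nat.le_ceil r⟩
    · rw [Real.dist_eq, abs_sub_comm, abs_of_nonneg (sub_nonneg.2 (Nat.floor_le hr₀))]
      linarith [Nat.lt_floor_add_one r]
    · rw [Real.dist_eq, abs_of_nonneg (sub_nonneg.2 (Nat.le_ceil r))]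
      linarith [Nat.ceil_lt_add_one hr₀]
  · rcases lt_or_ge r 1 with hr₁ | hr₁
    · refine ⟨_, ⟨1, by simp; omega, rfl⟩, _, ⟨2, hm, rfl⟩, ?_, ?_, ?_⟩
      · rw [segment_eq_uIcc, mem_uIcc]
        exact Or.inl ⟨by simpa using hr₁.le, by norm_num⟩
      · rw [Real.dist_eq, Real.dist_eq, abs_of_nonneg (by simp; linarith)]
        norm_num; linarith
      · rw [Real.dist_eq]; norm_num
    · obtain ⟨k, hk⟩ : ∃ k, ⌊r⌋₊ = k + 1 := Nat.exists_eq_add_one.2 (Nat.floor_pos.2 hr₁)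
      have hfloor : ⌊r⌋₊ ≤ m := (Nat.floor_le_ceil r).trans (Nat.ceil_le.2 hrm)
      have hkr : (k : ℝ) + 1 ≤ r := by exact_mod_cast hk ▸ Nat.floor_le hr₀
      have hrk : r < k + 2 := by
        have := Nat.lt_floor_add_one r
        rw [hk] at this; push_cast at this; linarith
      refine ⟨_, ⟨k + 1, by simp; omega, rfl⟩, _, ⟨k, by simp; omega, rfl⟩, ?_, ?_, ?_⟩
      · rw [segment_eq_uIcc, mem_uIcc]
        exact Or.inr ⟨by simp, by simpa using hkr⟩
      · rw [Real.dist_eq, Real.dist_eq, abs_sub_comm, abs_of_nonneg (by push_cast; linarith)]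
        norm_num; linarith
      · norm_num

theorem exists_finite_isConvexMesh_Icc (a b : ℝ) {h : ℝ} (hh : 0 < h) :
    ∃ S : Set ℝ, S.Finite ∧ IsConvexMesh S (Icc a b) h := by
  rcases le_or_gt b a with hba | hab
  · exact ⟨_, (subsingleton_Icc_of_ge hba).finite, isConvexMesh_self hh.le⟩
  obtain ⟨m, hm, hmh⟩ : ∃ m : ℕ, 2 ≤ m ∧ (b - a) / h ≤ m :=
    ⟨max 2 ⌈(b - a) / h⌉₊, le_max_left _ _, (Nat.le_ceil _).trans (by simp)⟩
  set δ := (b - a) / m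
  have hδ : 0 ≤ δ := by positivity
  have hδh : δ * 1 ≤ h := by
    rw [mul_one, div_le_iff₀ (by positivity)]; rwa [div_le_iff₀ hh, mul_comm] at hmh
  have hIcc : (a + δ • ·) '' Icc (0 : ℝ) m = Icc a b := by
    have hδm : δ * m = b - a := div_mul_cancel₀ _ (by positivity)
    simp_rw [smul_eq_mul, add_comm a, image_affine_Icc' (by positivity : 0 < δ), hδm]
    simp
  have hmesh := ((isConvexMesh_natCast_Icc hm).image_const_add_smul a hδ).mono hδh
  rw [hIcc] at hmesh
  exact ⟨_, ((finite_Iic m).image _).image _, hmesh⟩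

theorem convex_pointwise_to_uniform_general
    (a b : ℝ) (f : ℕ → ℝ → ℝ) (g : ℝ → ℝ)
    (hconv : ∀ n, ConvexOn ℝ (Set.Icc a b) (f n))
    (hgcont : ContinuousOn g (Set.Icc a b))
    (hpt : ∀ x ∈ Set.Icc a b, Tendsto (fun n => f n x) atTop (𝓝 (g x))) :
    TendstoUniformlyOn f g atTop (Set.Icc a b) :=
  tendstoUniformlyOn_of_convexOn (fun _ hh => exists_finite_isConvexMesh_Icc a b hh) hconv
    (isCompact_Icc.uniformContinuousOn_of_continuous hgcont) hpt

/-- A sequence of continuous convex functions on `[a,b]` converging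
pointwise to a continuous function `f` converges uniformly on `[a,b]`. -/
theorem convex_pointwise_to_uniform
    (a b : ℝ) (hab : a ≤ b) (f : ℕ → ℝ → ℝ) (g : ℝ → ℝ)
    (hconv : ∀ n, ConvexOn ℝ (Set.Icc a b) (f n))
    (hcont : ∀ n, ContinuousOn (f n) (Set.Icc a b))
    (hgcont : ContinuousOn g (Set.Icc a b))
    (hpt : ∀ x ∈ Set.Icc a b, Tendsto (fun n => f n x) atTop (𝓝 (g x))) :
    TendstoUniformlyOn f g atTop (Set.Icc a b) :=
  convex_pointwise_to_uniform_general a b f g hconv hgcont hpt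
end

section
/- Let (f_n) be a sequence of continuous convex functions on [a,b] converging pointwise to f with |f(x)| < ∞ for all x ∈ [a,b]. Then for every relatively open subset F ⊆ [a,b], lim_{n→∞} inf_{x∈F} f_n(x) = inf_{x∈F} f(x). -/
/-!
A convex function lies above each of its secant lines outside the chord. For fixed `c ∈ F` and `d`,
`f n c → g c ≥ inf_F g` and `f n d → g d`, so for all large `n` the secant line of `f n` through
`c` and `d` bounds `f n` below by `inf_F g - ε` at every `x` on the far side of `c` from `d` that is
close enough to `c`. Choosing `c ∈ F` close to a point `y` (or, when `y` is isolated in `F`, using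
`f n y → g y`) gives this bound on a neighbourhood of every `y`, and compactness of the closure of
`F` makes it global. The reverse inequality needs only convergence at a near-minimiser of `g`.
-/

open Filter Set
open scoped Topology

theorem ConvexOn.secant_le_of_div_nonpos {s : Set ℝ} {φ : ℝ → ℝ} (hφ : ConvexOn ℝ s φ)
    {x c d : ℝ} (hx : x ∈ s) (hc : c ∈ s) (hd : d ∈ s) (hcd : c ≠ d)
    (hxcd : (x - c) / (d - c) ≤ 0) : φ c + (x - c) / (d - c) * (φ d - φ c) ≤ φ x := by
  rcases eq_or_ne x c with rfl | hxc
  · simp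
  have hslope : φ x - φ c = (x - c) * ((φ x - φ c) / (x - c)) := by
    field_simp [sub_ne_zero.2 hxc]
  rw [div_mul_eq_mul_div, mul_div_assoc]
  rcases div_nonpos_iff.1 hxcd with ⟨hcx, hdc⟩ | ⟨hxc', hcd'⟩
  · have hmono := hφ.secant_mono hc hd hx hcd.symm hxc (by linarith)
    linarith [mul_le_mul_of_nonneg_left hmono hcx]
  · have hmono := hφ.secant_mono hc hx hd hxc hcd.symm (by linarith)
    linarith [mul_le_mul_of_nonpos_left hmono hxc']

theorem convexOn_of_tendsto {ι E : Type*} [AddCommMonoid E] [SMul ℝ E] {l : Filter ι} [l.NeBot]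
    {s : Set E} {f : ι → E → ℝ} {g : E → ℝ} (hconv : ∀ i, ConvexOn ℝ s (f i))
    (hpt : ∀ x ∈ s, Tendsto (fun i => f i x) l (𝓝 (g x))) : ConvexOn ℝ s g := by
  classical
  have hlim : Tendsto (fun i => s.piecewise (f i) 0) l (𝓝 (s.piecewise g 0)) := by
    refine tendsto_pi_nhds.2 fun x => ?_
    by_cases hx : x ∈ s
    · simpa [piecewise_eq_of_mem _ _ _ hx] using hpt x hx
    · simp [piecewise_eq_of_notMem _ _ _ hx]
  refine (isClosed_setOfPred_convexOn.mem_of_tendsto hlim (Eventually.of_forall fun i => ?_) :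
    ConvexOn ℝ s (s.piecewise g 0)).congr (piecewise_eqOn _ _ _)
  exact (hconv i).congr fun x hx => (piecewise_eq_of_mem _ _ _ hx).symm

theorem ConvexOn.bddBelow_image_Icc {a b : ℝ} {φ : ℝ → ℝ} (hφ : ConvexOn ℝ (Icc a b) φ) :
    BddBelow (φ '' Icc a b) := by
  refine ⟨2 * φ ((a + b) / 2) - max (φ a) (φ b), forall_mem_image.2 fun x hx => ?_⟩
  have hab : a ≤ b := hx.1.trans hx.2
  have hx' : a + b - x ∈ Icc a b := ⟨by linarith [hx.2], by linarith [hx.1]⟩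
  have hmid := hφ.2 hx hx' one_half_pos.le one_half_pos.le (add_halves 1)
  have hmax := hφ.le_max_of_mem_Icc (left_mem_Icc.2 hab) (right_mem_Icc.2 hab) hx'
  rw [smul_eq_mul, smul_eq_mul, ← mul_add, add_sub_cancel, one_div_mul_eq_div] at hmid
  simp only [smul_eq_mul] at hmid
  linarith

section
variable {ι : Type*} {l : Filter ι} {s F : Set ℝ} {f : ι → ℝ → ℝ} {g : ℝ → ℝ} {m ε : ℝ}

theorem exists_mem_nhds_eventually_sub_le_of_frequently_between
    (hconv : ∀ i, ConvexOn ℝ s (f i)) (hpt : ∀ x ∈ s, Tendsto (fun i => f i x) l (𝓝 (g x)))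
    (hFs : F ⊆ s) (hm : ∀ x ∈ F, m ≤ g x) (hε : 0 < ε) {y d : ℝ} (hd : d ∈ s) (hyd : y ≠ d)
    (hc : ∃ᶠ c in 𝓝 y, c ∈ F ∧ (y - c) / (d - c) < 0) :
    ∃ V ∈ 𝓝 y, ∀ᶠ i in l, ∀ x ∈ F ∩ V, m - ε ≤ f i x := by
  have hlim : Tendsto (fun p : ℝ × ℝ => (p.1 - p.2) / (d - p.2) * (g d - m + ε)) (𝓝 y ×ˢ 𝓝 y)
      (𝓝 0) := by
    rw [← nhds_prod_eq]
    simpa using (((continuous_fst.sub continuous_snd).tendsto (y, y)).div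
      ((continuous_const.sub continuous_snd).tendsto (y, y)) (sub_ne_zero.2 hyd.symm)).mul_const
      (g d - m + ε)
  obtain ⟨pa, hpa, pb, hpb, hP⟩ :=
    eventually_prod_iff.1 (hlim.eventually_const_lt (neg_lt_zero.2 (half_pos hε)))
  obtain ⟨c, ⟨hcF, hyc⟩, hpbc⟩ := (hc.and_eventually hpb).exists
  have hcd : c ≠ d := by
    rintro rfl
    simp at hyc
  have hV : ∀ᶠ x in 𝓝 y, (x - c) / (d - c) < 0 :=
    ((by fun_prop : Continuous fun x : ℝ => (x - c) / (d - c)).tendsto y).eventually_lt_const hyc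
  refine ⟨{x | pa x ∧ (x - c) / (d - c) < 0}, hpa.and hV, ?_⟩
  filter_upwards [(hpt c (hFs hcF)).eventually_const_lt (by linarith [hm c hcF] : m - ε / 2 < g c),
    (hpt d hd).eventually_lt_const (by linarith : g d < g d + ε / 2)]
    with i hic hid x ⟨hxF, hpax, hxc⟩
  have hsec := (hconv i).secant_le_of_div_nonpos (hFs hxF) (hFs hcF) hd hcd hxc.le
  have hK := hP hpax hpbc
  set t := (x - c) / (d - c)
  linarith [mul_le_mul_of_nonpos_left hid.le hxc.le,
    mul_le_mul_of_nonneg_left hic.le (by linarith : (0 : ℝ) ≤ 1 - t)]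

theorem exists_mem_nhds_eventually_sub_le_of_not_frequently
    (hpt : ∀ x ∈ s, Tendsto (fun i => f i x) l (𝓝 (g x)))
    (hFs : F ⊆ s) (hm : ∀ x ∈ F, m ≤ g x) (hε : 0 < ε) {y : ℝ} (hy : ¬∃ᶠ x in 𝓝[≠] y, x ∈ F) :
    ∃ V ∈ 𝓝 y, ∀ᶠ i in l, ∀ x ∈ F ∩ V, m - ε ≤ f i x := by
  rw [not_frequently, eventually_nhdsWithin_iff] at hy
  refine ⟨_, hy, ?_⟩
  have hfy : ∀ᶠ i in l, y ∈ F → m - ε ≤ f i y := by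
    refine eventually_imp_distrib_left.2 fun hyF => ?_
    exact ((hpt y (hFs hyF)).eventually_const_lt (by linarith [hm y hyF])).mono fun i => le_of_lt
  filter_upwards [hfy] with i hi x ⟨hxF, hxy⟩
  obtain rfl : x = y := not_not.1 fun hne => hxy hne hxF
  exact hi hxF

theorem exists_mem_nhds_eventually_sub_le
    (hconv : ∀ i, ConvexOn ℝ s (f i)) (hpt : ∀ x ∈ s, Tendsto (fun i => f i x) l (𝓝 (g x)))
    (hFs : F ⊆ s) (hm : ∀ x ∈ F, m ≤ g x) (hε : 0 < ε) (y : ℝ) :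
    ∃ V ∈ 𝓝 y, ∀ᶠ i in l, ∀ x ∈ F ∩ V, m - ε ≤ f i x := by
  by_cases hy : ∃ᶠ x in 𝓝[≠] y, x ∈ F
  swap
  · exact exists_mem_nhds_eventually_sub_le_of_not_frequently hpt hFs hm hε hy
  rw [← nhdsLT_sup_nhdsGT, frequently_sup] at hy
  rcases hy with hy | hy
  · obtain ⟨d, hdF, hdy⟩ := (hy.and_eventually self_mem_nhdsWithin).exists
    refine exists_mem_nhds_eventually_sub_le_of_frequently_between hconv hpt hFs hm hε (hFs hdF)
      (ne_of_gt hdy)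
      (((hy.and_eventually (Ioo_mem_nhdsLT hdy)).filter_mono nhdsWithin_le_nhds).mono ?_)
    rintro c ⟨hcF, hdc, hcy⟩
    exact ⟨hcF, div_neg_of_pos_of_neg (by linarith) (by linarith)⟩
  · obtain ⟨d, hdF, hyd⟩ := (hy.and_eventually self_mem_nhdsWithin).exists
    refine exists_mem_nhds_eventually_sub_le_of_frequently_between hconv hpt hFs hm hε (hFs hdF)
      (ne_of_lt hyd)
      (((hy.and_eventually (Ioo_mem_nhdsGT hyd)).filter_mono nhdsWithin_le_nhds).mono ?_)
    rintro c ⟨hcF, hyc, hcd⟩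
    exact ⟨hcF, div_neg_of_neg_of_pos (by linarith) (by linarith)⟩

theorem eventually_forall_sub_le_of_tendsto
    (hconv : ∀ i, ConvexOn ℝ s (f i)) (hpt : ∀ x ∈ s, Tendsto (fun i => f i x) l (𝓝 (g x)))
    (hFs : F ⊆ s) (hF : Bornology.IsBounded F) (hm : ∀ x ∈ F, m ≤ g x) (hε : 0 < ε) :
    ∀ᶠ i in l, ∀ x ∈ F, m - ε ≤ f i x := by
  suffices h : ∀ᶠ i in l, ∀ x ∈ F ∩ closure F, m - ε ≤ f i x by
    rwa [inter_eq_left.2 subset_closure] at h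
  refine hF.isCompact_closure.induction_on ?_ ?_ ?_ ?_
  · simp
  · intro K K' hKK' h
    exact h.mono fun i hi x hx => hi x ⟨hx.1, hKK' hx.2⟩
  · intro K K' hK hK'
    filter_upwards [hK, hK'] with i hi hi' x ⟨hxF, hx⟩
    exact hx.elim (fun hx => hi x ⟨hxF, hx⟩) fun hx => hi' x ⟨hxF, hx⟩
  · intro y _
    obtain ⟨V, hV, hVl⟩ := exists_mem_nhds_eventually_sub_le hconv hpt hFs hm hε y
    exact ⟨V, mem_nhdsWithin_of_mem_nhds hV, hVl⟩

end

theorem tendsto_sInf_image_of_forall_eventually_le {ι α : Type*} {l : Filter ι} {f : ι → α → ℝ}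
    {g : α → ℝ} {F : Set α} (hpt : ∀ x ∈ F, Tendsto (fun i => f i x) l (𝓝 (g x)))
    (hlow : ∀ ε > 0, ∀ᶠ i in l, ∀ x ∈ F, sInf (g '' F) - ε ≤ f i x) :
    Tendsto (fun i => sInf (f i '' F)) l (𝓝 (sInf (g '' F))) := by
  rcases F.eq_empty_or_nonempty with rfl | hF
  · simpa using tendsto_const_nhds
  refine tendsto_order.2 ⟨fun u hu => ?_, fun u hu => ?_⟩
  · filter_upwards [hlow _ (half_pos (sub_pos.2 hu))] with i hi
    calc u < sInf (g '' F) - (sInf (g '' F) - u) / 2 := by linarith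
      _ ≤ sInf (f i '' F) := le_csInf (hF.image _) (forall_mem_image.2 hi)
  · obtain ⟨_, ⟨x, hxF, rfl⟩, hxu⟩ := exists_lt_of_csInf_lt (hF.image g) hu
    filter_upwards [hlow 1 one_pos, (hpt x hxF).eventually_lt_const hxu] with i hi hiu
    exact (csInf_le ⟨_, forall_mem_image.2 hi⟩ (mem_image_of_mem _ hxF)).trans_lt hiu

theorem inf_converges_on_relatively_open_general
    (a b : ℝ) (f : ℕ → ℝ → ℝ) (g : ℝ → ℝ)
    (hconv : ∀ n, ConvexOn ℝ (Set.Icc a b) (f n))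
    (hpt : ∀ x ∈ Set.Icc a b, Tendsto (fun n => f n x) atTop (𝓝 (g x)))
    (F : Set ℝ) (hFsub : F ⊆ Set.Icc a b) :
    Tendsto (fun n => sInf (f n '' F)) atTop (𝓝 (sInf (g '' F))) := by
  have hgF : BddBelow (g '' F) :=
    (convexOn_of_tendsto hconv hpt).bddBelow_image_Icc.mono (image_mono hFsub)
  refine tendsto_sInf_image_of_forall_eventually_le (fun x hx => hpt x (hFsub hx)) fun ε hε => ?_
  exact eventually_forall_sub_le_of_tendsto hconv hpt hFsub
    ((Metric.isBounded_Icc a b).subset hFsub) (fun x hx => csInf_le hgF (mem_image_of_mem g hx)) hε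

/-- If continuous convex functions `f n` on `[a,b]` converge
pointwise to a (finite) function `f`, then for every relatively open subset
`F ⊆ [a,b]`, the infima converge: `lim_n inf_{x∈F} f_n(x) = inf_{x∈F} f(x)`. -/
theorem inf_converges_on_relatively_open
    (a b : ℝ) (hab : a ≤ b) (f : ℕ → ℝ → ℝ) (g : ℝ → ℝ)
    (hconv : ∀ n, ConvexOn ℝ (Set.Icc a b) (f n))
    (hcont : ∀ n, ContinuousOn (f n) (Set.Icc a b))
    (hpt : ∀ x ∈ Set.Icc a b, Tendsto (fun n => f n x) atTop (𝓝 (g x)))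
    (F : Set ℝ) (hFsub : F ⊆ Set.Icc a b)
    (hFopen : ∃ U : Set ℝ, IsOpen U ∧ F = U ∩ Set.Icc a b) :
    Tendsto (fun n => sInf (f n '' F)) atTop (𝓝 (sInf (g '' F))) :=
  inf_converges_on_relatively_open_general a b f g hconv hpt F hFsub
end

section
/- For the standard Gaussian-type typical set, i.e., the Euclidean ball B_n(√(nν(1+2ε))) in ℝⁿ, the j-th intrinsic volume equals C(n,j) · (ω_n/ω_{n−j}) · (nν(1+2ε))^{j/2}, and consequently lim_{ε→0+} lim_{n→∞} (1/n) log V_{⌊nθ⌋}(B_n(√(nν(1+2ε)))) = H(θ) + (θ/2)log(2πeν) + ((1−θ)/2)log(1−θ) for θ ∈ (0,1), where H(θ) = −θ log θ − (1−θ)log(1−θ). -/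
/-!
Stirling's formula gives `log Γ(x + 1) = x log x - x + o(x)` for real `x → ∞`, by squeezing
`Γ(x + 1)` between `⌊x⌋!` and `(⌊x⌋ + 1)!`. Writing the binomial coefficient and the ratio of
unit-ball volumes through `Γ`, `log V_j(B_n(√(nκ)))` with `j = ⌊nθ⌋` is a signed sum of
`log Γ(x + 1)` over `x = n, j, n - j, n/2, (n - j)/2`, plus `(j/2) log(πκ)`; the terms
`x log n` of these five cancel, and after dividing by `n` each `log Γ(x + 1) - x log n` tends to
`t log t - t`, where `t` is the limit of `x / n`. The outer limit `ε → 0⁺` is continuity in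
`κ = ν(1 + 2ε)`.
-/

open Filter Real Asymptotics
open scoped Topology Nat

theorem isLittleO_log_factorial_sub :
    (fun n : ℕ => log n ! - (n * log n - n)) =o[atTop] (fun n => (n : ℝ)) := by
  have hseq : (fun n : ℕ => log (Stirling.stirlingSeq n)) =o[atTop] (fun n => (n : ℝ)) :=
    ((Stirling.tendsto_stirlingSeq_sqrt_pi.log (by positivity)).isBigO_one ℝ).trans_isLittleO
      (isLittleO_const_id_atTop (1 : ℝ)).natCast_atTop
  have hlog : (fun n : ℕ => log (2 * n)) =o[atTop] (fun n => (n : ℝ)) :=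
    (isLittleO_log_id_atTop.comp_tendsto
      (tendsto_natCast_atTop_atTop.const_mul_atTop two_pos)).trans_isBigO
      ((isBigO_refl _ _).const_mul_left 2)
  refine (hseq.add (hlog.const_mul_left (1 / 2))).congr' ?_ EventuallyEq.rfl
  filter_upwards [eventually_ne_atTop 0] with n hn
  rw [Stirling.log_stirlingSeq_formula, log_div (by positivity) (exp_pos 1).ne', log_exp]
  ring

theorem mul_log_sub_sub_mem_Icc {a b : ℝ} (ha : 0 < a) (hab : a ≤ b) :
    (b * log b - b) - (a * log a - a) ∈ Set.Icc ((b - a) * log a) ((b - a) * log b) := by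
  have hb : 0 < b := ha.trans_le hab
  have h₁ : b * (log a - log b) ≤ a - b := by
    have := mul_le_mul_of_nonneg_left (log_le_sub_one_of_pos (div_pos ha hb)) hb.le
    rwa [log_div ha.ne' hb.ne', mul_sub_one, mul_div_cancel₀ _ hb.ne'] at this
  have h₂ : a * (log b - log a) ≤ b - a := by
    have := mul_le_mul_of_nonneg_left (log_le_sub_one_of_pos (div_pos hb ha)) ha.le
    rwa [log_div hb.ne' ha.ne', mul_sub_one, mul_div_cancel₀ _ ha.ne'] at this
  constructor <;> linarith

theorem log_Gamma_add_one_mem_Icc {x : ℝ} (hx : 1 ≤ x) :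
    log (Gamma (x + 1)) ∈ Set.Icc (log ⌊x⌋₊ !) (log ⌊x⌋₊ ! + log (⌊x⌋₊ + 1)) := by
  have hk : (1 : ℝ) ≤ ⌊x⌋₊ := by exact_mod_cast Nat.one_le_floor_iff x |>.mpr hx
  have hkx : (⌊x⌋₊ : ℝ) ≤ x := Nat.floor_le (by linarith)
  have hxk : x < ⌊x⌋₊ + 1 := Nat.lt_floor_add_one x
  have hmono := Gamma_strictMonoOn_Ici.monotoneOn
  have hlow : Gamma (⌊x⌋₊ + 1) ≤ Gamma (x + 1) :=
    hmono (by simp only [Set.mem_Ici]; linarith) (by simp only [Set.mem_Ici]; linarith)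
      (by linarith)
  have hup : Gamma (x + 1) ≤ Gamma ((⌊x⌋₊ + 1 : ℕ) + 1) :=
    hmono (by simp only [Set.mem_Ici]; linarith) (by simp only [Set.mem_Ici]; push_cast; linarith)
      (by push_cast; linarith)
  rw [Gamma_nat_eq_factorial] at hlow hup
  rw [Nat.factorial_succ, Nat.cast_mul] at hup
  have hfac : (0 : ℝ) < ⌊x⌋₊ ! := by positivity
  constructor
  · exact log_le_log hfac hlow
  · calc log (Gamma (x + 1)) ≤ log (((⌊x⌋₊ + 1 : ℕ) : ℝ) * ⌊x⌋₊ !) :=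
          log_le_log (Gamma_pos_of_pos (by linarith)) hup
      _ = _ := by rw [log_mul (by positivity) hfac.ne']; push_cast; ring

theorem isLittleO_log_Gamma_add_one :
    (fun x : ℝ => log (Gamma (x + 1)) - (x * log x - x)) =o[atTop] id := by
  set E : ℕ → ℝ := fun n => log n ! - (n * log n - n)
  have hfloor : (fun x : ℝ => (⌊x⌋₊ : ℝ)) =O[atTop] id := by
    refine IsBigO.of_bound 1 ?_
    filter_upwards [eventually_ge_atTop 0] with x hx
    simpa [abs_of_nonneg hx] using Nat.floor_le hx
  have hE : (fun x : ℝ => E ⌊x⌋₊) =o[atTop] id :=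
    (isLittleO_log_factorial_sub.comp_tendsto tendsto_nat_floor_atTop).trans_isBigO hfloor
  have hlog : (fun x : ℝ => log (x + 1)) =o[atTop] id := by
    refine (isLittleO_log_id_atTop.comp_tendsto (tendsto_atTop_add_const_right _ 1 tendsto_id))
      |>.trans_isBigO (IsBigO.of_bound 2 ?_)
    filter_upwards [eventually_ge_atTop 1] with x hx
    simp only [Function.comp_apply, id, norm_eq_abs]
    rw [abs_of_nonneg (by linarith), abs_of_nonneg (by linarith)]
    linarith
  refine IsBigO.trans_isLittleO (IsBigO.of_bound 1 ?_) (hE.norm_left.add (hlog.const_mul_left 2))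
  filter_upwards [eventually_ge_atTop 1] with x hx
  have hk : (1 : ℝ) ≤ ⌊x⌋₊ := by exact_mod_cast (Nat.one_le_floor_iff x).mpr hx
  have hkx : (⌊x⌋₊ : ℝ) ≤ x := Nat.floor_le (by linarith)
  have hxk : x < ⌊x⌋₊ + 1 := Nat.lt_floor_add_one x
  obtain ⟨hΓ₁, hΓ₂⟩ := log_Gamma_add_one_mem_Icc hx
  obtain ⟨hf₁, hf₂⟩ := mul_log_sub_sub_mem_Icc (by linarith) hkx
  have hlogk : 0 ≤ log ⌊x⌋₊ := log_nonneg hk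
  have hlogx : log x ≤ log (x + 1) := log_le_log (by linarith) (by linarith)
  have hlogk1 : log (⌊x⌋₊ + 1) ≤ log (x + 1) := log_le_log (by positivity) (by linarith)
  have hx₀ : 0 ≤ log x := log_nonneg hx
  have hfk : 0 ≤ (x - ⌊x⌋₊) * log ⌊x⌋₊ := mul_nonneg (by linarith) hlogk
  have hfx : (x - ⌊x⌋₊) * log x ≤ log x := mul_le_of_le_one_left hx₀ (by linarith)
  have hEk : E ⌊x⌋₊ = log ⌊x⌋₊ ! - (⌊x⌋₊ * log ⌊x⌋₊ - ⌊x⌋₊) := rfl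
  simp only [one_mul, norm_eq_abs]
  refine (abs_le.mpr ⟨?_, ?_⟩).trans (le_abs_self _) <;>
    linarith [le_abs_self (E ⌊x⌋₊), neg_abs_le (E ⌊x⌋₊)]

theorem tendsto_log_Gamma_add_one_sub_mul_log_div {x : ℕ → ℝ} {t : ℝ} (ht : 0 < t)
    (hx : Tendsto (fun n => x n / n) atTop (𝓝 t)) :
    Tendsto (fun n => (log (Gamma (x n + 1)) - x n * log n) / n) atTop
      (𝓝 (t * log t - t)) := by
  have hx_atTop : Tendsto x atTop atTop :=
    (hx.pos_mul_atTop ht tendsto_natCast_atTop_atTop).congr' <| by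
      filter_upwards [eventually_ne_atTop 0] with n hn
      field_simp
  have hstirling : Tendsto (fun n => (log (Gamma (x n + 1)) - (x n * log (x n) - x n)) / x n)
      atTop (𝓝 0) :=
    isLittleO_log_Gamma_add_one.tendsto_div_nhds_zero.comp hx_atTop
  have hmain := (hstirling.mul hx).add ((hx.mul (hx.log ht.ne')).sub hx)
  rw [zero_mul, zero_add] at hmain
  refine hmain.congr' ?_
  filter_upwards [eventually_ne_atTop 0, hx_atTop.eventually_gt_atTop 0] with n hn hxn
  rw [log_div hxn.ne' (by positivity)]
  field_simp
  ring

noncomputable def unitBallVolume (i : ℕ) : ℝ := π ^ ((i : ℝ) / 2) / Gamma ((i : ℝ) / 2 + 1)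

noncomputable def ballIntrinsicVolume (n j : ℕ) (r : ℝ) : ℝ :=
  n.choose j * (unitBallVolume n / unitBallVolume (n - j)) * r ^ j

theorem log_unitBallVolume (i : ℕ) :
    log (unitBallVolume i) = i / 2 * log π - log (Gamma (i / 2 + 1)) := by
  rw [unitBallVolume, log_div (by positivity) (Gamma_pos_of_pos (by positivity)).ne',
    log_rpow pi_pos]

theorem log_choose_eq_log_Gamma {n j : ℕ} (hj : j ≤ n) :
    log (n.choose j) =
      log (Gamma (n + 1)) - log (Gamma (j + 1)) - log (Gamma ((n - j : ℕ) + 1)) := by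
  simp only [Gamma_nat_eq_factorial]
  rw [Nat.cast_choose ℝ hj, log_div (by positivity) (by positivity),
    log_mul (by positivity) (by positivity)]
  ring

theorem log_ballIntrinsicVolume {n j : ℕ} (hj : j ≤ n) {r : ℝ} (hr : 0 < r) :
    log (ballIntrinsicVolume n j r) =
      log (Gamma (n + 1)) - log (Gamma (j + 1)) - log (Gamma ((n - j : ℕ) + 1))
        - log (Gamma (n / 2 + 1)) + log (Gamma ((n - j : ℕ) / 2 + 1))
        + j / 2 * log π + j * log r := by
  have hω : ∀ i, 0 < unitBallVolume i := fun i =>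
    div_pos (by positivity) (Gamma_pos_of_pos (by positivity))
  have hc : (0 : ℝ) < n.choose j := mod_cast Nat.choose_pos hj
  have hratio := div_pos (hω n) (hω (n - j))
  rw [ballIntrinsicVolume, log_mul (mul_pos hc hratio).ne' (by positivity),
    log_mul hc.ne' hratio.ne', log_div (hω _).ne' (hω _).ne',
    log_unitBallVolume, log_unitBallVolume, log_choose_eq_log_Gamma hj, log_pow,
    Nat.cast_sub hj]
  ring

theorem tendsto_log_ballIntrinsicVolume_div {κ θ : ℝ} (hκ : 0 < κ) (hθ₀ : 0 < θ) (hθ₁ : θ < 1) :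
    Tendsto (fun n : ℕ => 1 / (n : ℝ) * log (ballIntrinsicVolume n ⌊n * θ⌋₊ √(n * κ))) atTop
      (𝓝 (binEntropy θ + θ / 2 * log (2 * π * exp 1 * κ) + (1 - θ) / 2 * log (1 - θ))) := by
  set j : ℕ → ℕ := fun n => ⌊n * θ⌋₊
  have hj_le (n : ℕ) : j n ≤ n :=
    Nat.floor_le_of_le (mul_le_of_le_one_right n.cast_nonneg hθ₁.le)
  have hj : Tendsto (fun n => (j n : ℝ) / n) atTop (𝓝 θ) := by
    simpa only [Function.comp_def, mul_comm θ] using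
      (tendsto_nat_floor_mul_div_atTop hθ₀.le).comp tendsto_natCast_atTop_atTop
  have hn : Tendsto (fun n : ℕ => (n : ℝ) / n) atTop (𝓝 1) :=
    tendsto_const_nhds.congr' <| by
      filter_upwards [eventually_ne_atTop 0] with n hn
      field_simp
  have hm : Tendsto (fun n => ((n - j n : ℕ) : ℝ) / n) atTop (𝓝 (1 - θ)) :=
    (hn.sub hj).congr fun n => by rw [Nat.cast_sub (hj_le n)]; ring
  have halve {x : ℕ → ℝ} {t : ℝ} (hx : Tendsto (fun n => x n / n) atTop (𝓝 t)) :
      Tendsto (fun n => x n / 2 / n) atTop (𝓝 (t / 2)) :=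
    (hx.div_const 2).congr fun n => by ring
  have hlim := (((((tendsto_log_Gamma_add_one_sub_mul_log_div one_pos hn).sub
    (tendsto_log_Gamma_add_one_sub_mul_log_div hθ₀ hj)).sub
    (tendsto_log_Gamma_add_one_sub_mul_log_div (sub_pos.2 hθ₁) hm)).sub
    (tendsto_log_Gamma_add_one_sub_mul_log_div (half_pos one_pos) (halve hn))).add
    (tendsto_log_Gamma_add_one_sub_mul_log_div (half_pos (sub_pos.2 hθ₁)) (halve hm))).add
    (hj.mul_const (log (π * κ) / 2))
  convert hlim.congr' ?_ using 2
  · have hlog : log (2 * π * exp 1 * κ) = log 2 + log (π * κ) + 1 := by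
      rw [show 2 * π * exp 1 * κ = 2 * (π * κ) * exp 1 by ring,
        log_mul (by positivity) (exp_pos 1).ne', log_mul two_ne_zero (by positivity), log_exp]
    rw [binEntropy, log_inv, log_inv, log_one, log_div (sub_pos.2 hθ₁).ne' two_ne_zero,
      one_div, log_inv, hlog]
    ring
  · filter_upwards [eventually_ne_atTop 0] with n hn
    have hn₀ : (0 : ℝ) < n := by positivity
    rw [log_ballIntrinsicVolume (hj_le n) (by positivity), log_sqrt (by positivity),
      log_mul hn₀.ne' hκ.ne', log_mul pi_pos.ne' hκ.ne', Nat.cast_sub (hj_le n)]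
    field_simp
    ring

/-- For the Gaussian typical set, the ball `B_n(√(nν(1+2ε)))` has
`j`-th intrinsic volume `C(n,j) (ω_n/ω_{n-j}) (nν(1+2ε))^{j/2}`, and the iterated
limit of `(1/n) log V_{⌊nθ⌋}` as `n → ∞` and then `ε → 0⁺` equals
`H(θ) + (θ/2) log(2πeν) + ((1-θ)/2) log(1-θ)`. -/
theorem gaussian_intrinsic_entropy
    (ν θ : ℝ) (hν : 0 < ν) (hθ : θ ∈ Set.Ioo (0 : ℝ) 1)
    (ω : ℕ → ℝ)
    (hω : ∀ i : ℕ, ω i = Real.pi ^ ((i : ℝ) / 2) / Real.Gamma ((i : ℝ) / 2 + 1))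
    (V : ℕ → ℕ → ℝ → ℝ)
    (hV : ∀ (n j : ℕ) (r : ℝ), V n j r = (n.choose j : ℝ) * (ω n / ω (n - j)) * r ^ j)
    (H : ℝ → ℝ)
    (hH : ∀ x : ℝ, H x = -x * Real.log x - (1 - x) * Real.log (1 - x)) :
    ∃ L : ℝ → ℝ,
      (∀ ε : ℝ, 0 < ε →
        Tendsto (fun n : ℕ =>
            (1 / (n : ℝ)) *
              Real.log (V n ⌊(n : ℝ) * θ⌋₊ (Real.sqrt ((n : ℝ) * ν * (1 + 2 * ε)))))
          atTop (𝓝 (L ε))) ∧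
      Tendsto L (𝓝[>] 0)
        (𝓝 (H θ + θ / 2 * Real.log (2 * Real.pi * Real.exp 1 * ν) +
              (1 - θ) / 2 * Real.log (1 - θ))) := by
  obtain ⟨hθ₀, hθ₁⟩ := hθ
  obtain rfl : ω = unitBallVolume := funext hω
  obtain rfl : V = ballIntrinsicVolume := funext fun n => funext fun j => funext (hV n j)
  have hH_eq : H θ = binEntropy θ := by rw [hH, binEntropy, log_inv, log_inv]; ring
  refine ⟨fun ε => binEntropy θ + θ / 2 * log (2 * π * exp 1 * (ν * (1 + 2 * ε))) +
    (1 - θ) / 2 * log (1 - θ), fun ε hε => ?_, ?_⟩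
  · simpa only [mul_assoc] using
      tendsto_log_ballIntrinsicVolume_div (mul_pos hν (by linarith)) hθ₀ hθ₁
  · have hL : ContinuousAt (fun ε => binEntropy θ + θ / 2 * log (2 * π * exp 1 * (ν * (1 + 2 * ε)))
        + (1 - θ) / 2 * log (1 - θ)) 0 := by
      fun_prop (disch := positivity)
    simpa [hH_eq] using hL.tendsto.mono_left nhdsWithin_le_nhds
end

section
/- Let X ⊆ ℝⁿ be compact convex, and suppose the Loomis–Whitney-type inequality V_m(X) ≤ (1/(n−m)) ∑_{j=1}^n V_m(X|{j}^c) holds together with equality of all (n−1)-codimension-1 projection intrinsic volumes by symmetry (as holds for typical sets). Then iterating yields V_m(X) ≤ C(n,m) · V_m(X | {1,...,m}) = C(n,m) · |X | {1,...,m}|, where |·| denotes m-dimensional volume of the projection onto the first m coordinates. -/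
open scoped BigOperators

/-!
By symmetry `V S` depends only on `k = |S|`, and the Loomis–Whitney inequality becomes
`(k - m) v_k ≤ k v_{k-1}`. Since `(k - m) C(k, m) = k C(k - 1, m)`, this says exactly that
`v_k / C(k, m)` is nonincreasing in `k ≥ m`, so `v_n ≤ C(n, m) v_m`.
-/

theorem Nat.cast_choose_mul_succ_eq (k m : ℕ) (hm : m ≤ k) :
    (k.choose m : ℝ) * (k + 1) = (k + 1).choose m * ((k : ℝ) + 1 - m) := by
  have h := congrArg (Nat.cast : ℕ → ℝ) (Nat.choose_mul_succ_eq k m)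
  push_cast [Nat.cast_sub (by omega : m ≤ k + 1)] at h
  exact h

theorem le_choose_succ_mul_of_sub_mul_le {k m : ℕ} {x y c : ℝ} (hm : m ≤ k)
    (hx : ((k : ℝ) + 1 - m) * x ≤ (k + 1) * y) (hy : y ≤ k.choose m * c) :
    x ≤ (k + 1).choose m * c := by
  have hpos : (0 : ℝ) < (k : ℝ) + 1 - m := by
    have : (m : ℝ) ≤ k := by exact_mod_cast hm
    linarith
  refine le_of_mul_le_mul_left ?_ hpos
  calc ((k : ℝ) + 1 - m) * x ≤ (k + 1) * y := hx
    _ ≤ (k + 1) * (k.choose m * c) := by gcongr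
    _ = ((k : ℝ) + 1 - m) * ((k + 1).choose m * c) := by
      linear_combination c * Nat.cast_choose_mul_succ_eq k m hm

section Symmetric

variable {α : Type*} [DecidableEq α] {V : Finset α → ℝ}

theorem sum_erase_eq_card_mul (hsym : ∀ S T : Finset α, S.card = T.card → V S = V T)
    {S : Finset α} {j : α} (hj : j ∈ S) :
    ∑ i ∈ S, V (S.erase i) = S.card * V (S.erase j) := by
  rw [Finset.sum_congr rfl fun i hi => hsym _ (S.erase j) (by
    rw [Finset.card_erase_of_mem hi, Finset.card_erase_of_mem hj]), Finset.sum_const,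
    nsmul_eq_mul]

theorem le_choose_mul_of_loomisWhitney {m : ℕ}
    (hsym : ∀ S T : Finset α, S.card = T.card → V S = V T)
    (hLW : ∀ S : Finset α, m < S.card → ((S.card : ℝ) - m) * V S ≤ ∑ j ∈ S, V (S.erase j))
    {T : Finset α} (hT : T.card = m) (S : Finset α) (hS : m ≤ S.card) :
    V S ≤ (S.card.choose m : ℝ) * V T := by
  induction S using Finset.induction_on with
  | empty =>
    have hm : m = 0 := by simpa using hS
    simp [hsym ∅ T (by simp [hT, hm]), hm]
  | insert a s ha ih =>
    rw [Finset.card_insert_of_notMem ha] at hS ⊢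
    rcases hS.eq_or_lt with hm | hm
    · rw [← hm, Nat.choose_self, Nat.cast_one, one_mul, hsym _ T (by simp [ha, hT, hm])]
    · refine le_choose_succ_mul_of_sub_mul_le (by omega) ?_ (ih (by omega))
      have h := hLW (insert a s) (by rw [Finset.card_insert_of_notMem ha]; exact hm)
      rwa [sum_erase_eq_card_mul hsym (Finset.mem_insert_self a s), Finset.erase_insert ha,
        Finset.card_insert_of_notMem ha, Nat.cast_succ] at h

end Symmetric

theorem loomis_whitney_iteration_general
    (n m : ℕ) (hmn : m ≤ n)
    (V : Finset (Fin n) → ℝ)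
    (hsym : ∀ S T : Finset (Fin n), S.card = T.card → V S = V T)
    (hLW : ∀ S : Finset (Fin n), m < S.card →
      ((S.card : ℝ) - m) * V S ≤ ∑ j ∈ S, V (S.erase j))
    (S₀ : Finset (Fin n)) (hS₀ : S₀.card = m) :
    V Finset.univ ≤ (n.choose m : ℝ) * V S₀ := by
  simpa using le_choose_mul_of_loomisWhitney hsym hLW hS₀ Finset.univ (by simpa using hmn)

/-- If `V S` denotes the `m`-th intrinsic volume of the projection
of a compact convex set `X ⊆ ℝⁿ` onto the coordinate subspace indexed by
`S ⊆ {1,…,n}`, all projections onto coordinate subsets of equal cardinality have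
equal `m`-th intrinsic volume (symmetry, as for typical sets), and the
Loomis–Whitney-type inequality
`(|S| − m) V(S) ≤ ∑_{j ∈ S} V(S ∖ {j})` holds whenever `|S| > m`, then iterating
yields `V_m(X) = V(univ) ≤ C(n,m) · V(S₀)` for any `S₀` with `|S₀| = m`, where
`V(S₀)` is the `m`-dimensional volume of the projection onto those coordinates. -/
theorem loomis_whitney_iteration
    (n m : ℕ) (hmn : m ≤ n)
    (V : Finset (Fin n) → ℝ)
    (hnonneg : ∀ S, 0 ≤ V S)
    (hsym : ∀ S T : Finset (Fin n), S.card = T.card → V S = V T)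
    (hLW : ∀ S : Finset (Fin n), m < S.card →
      ((S.card : ℝ) - m) * V S ≤ ∑ j ∈ S, V (S.erase j))
    (S₀ : Finset (Fin n)) (hS₀ : S₀.card = m) :
    V Finset.univ ≤ (n.choose m : ℝ) * V S₀ :=
  loomis_whitney_iteration_general n m hmn V hsym hLW S₀ hS₀
end

section
/- Fix δ ∈ (0, 1/2) and α > 1. Define μ_n(i) = C(n−1, i) α^i for 0 ≤ i ≤ n−1 and μ_n(n) = δ. Then (μ_n) is a proper super-convolutive sequence, its limit function is Λ(t) = log(1 + αe^t), and the convex conjugate satisfies Λ*(1) = −log α, which is strictly less than −lim_n (1/n) log μ_n(n) = 0. -/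
/-!
Up to the shift `n = c + 1`, `μ n` is the coefficient sequence of
`M c = (1 + α X) ^ c + δ X ^ (c + 1)` (`spikedBinomialPoly δ α c`), so the convolution of `μ m`
and `μ n` is the coefficient sequence of a product of such polynomials. Super-convolutivity then
says that `M (a + b + 1) - M a * M b` has nonnegative coefficients; with `P = 1 + α X` this
difference is
`δ X ((P^a - X^a) P^b + (P^b - X^b) P^a) + (α - 2δ) X P^(a+b) + δ (1 - δ) X^(a+b+2)`, and every
factor has nonnegative coefficients because `P - X = 1 + (α - 1) X`.

The generating sum `∑ μ n j e^(jt)` is `M (n-1)` evaluated at `e^t`, which lies between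
`r^(n-1)` and `(1 + δ) r^n` for `r = 1 + α e^t`; this gives `Λ`. Finally
`t - log (1 + α e^t) = -log (e^(-t) + α)` increases to `-log α`, while `μ n n = δ` is constant.
-/

open Filter Polynomial
open scoped Topology

namespace Polynomial

variable (R : Type*) [CommSemiring R] [PartialOrder R] [IsOrderedRing R]

def nonnegCoeffs : Subsemiring R[X] where
  carrier := {p | ∀ i, 0 ≤ p.coeff i}
  mul_mem' {p q} hp hq i := by
    rw [coeff_mul]
    exact Finset.sum_nonneg fun _ _ => mul_nonneg (hp _) (hq _)
  one_mem' i := by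
    rw [coeff_one]
    split_ifs <;> simp
  add_mem' {p q} hp hq i := by
    rw [coeff_add]
    exact add_nonneg (hp i) (hq i)
  zero_mem' _ := le_rfl

variable {R}

theorem mem_nonnegCoeffs {p : R[X]} : p ∈ nonnegCoeffs R ↔ ∀ i, 0 ≤ p.coeff i := Iff.rfl

theorem C_mem_nonnegCoeffs {a : R} (ha : 0 ≤ a) : C a ∈ nonnegCoeffs R :=
  mem_nonnegCoeffs.mpr fun i => by
    rw [coeff_C]
    split_ifs <;> simp [ha]

theorem X_mem_nonnegCoeffs : (X : R[X]) ∈ nonnegCoeffs R :=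
  mem_nonnegCoeffs.mpr fun i => by
    rw [coeff_X]
    split_ifs <;> simp

end Polynomial

theorem Subsemiring.pow_sub_pow_mem {A : Type*} [CommRing A] (S : Subsemiring A) {p q : A}
    (hpq : p - q ∈ S) (hq : q ∈ S) (n : ℕ) : p ^ n - q ^ n ∈ S := by
  have hp : p ∈ S := by simpa using S.add_mem hpq hq
  induction n with
  | zero => simp
  | succ n ih =>
    have h : p ^ (n + 1) - q ^ (n + 1) = p * (p ^ n - q ^ n) + (p - q) * q ^ n := by ring
    rw [h]
    exact S.add_mem (S.mul_mem hp ih) (S.mul_mem hpq (S.pow_mem hq n))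

theorem Polynomial.sum_range_coeff_mul_coeff {R : Type*} [Semiring R] (p q : R[X]) (i : ℕ) :
    ∑ k ∈ Finset.range (i + 1), p.coeff k * q.coeff (i - k) = (p * q).coeff i := by
  rw [coeff_mul, Finset.Nat.sum_antidiagonal_eq_sum_range_succ_mk]

theorem Polynomial.coeff_one_add_C_mul_X_pow {R : Type*} [CommSemiring R] (a : R) (n k : ℕ) :
    ((1 + C a * X) ^ n).coeff k = n.choose k * a ^ k := by
  rw [show (1 + C a * X) ^ n = ((1 + X) ^ n).comp (C a * X) by simp [add_comp, pow_comp],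
    comp_C_mul_X_coeff, coeff_one_add_X_pow]

noncomputable def spikedBinomialPoly (δ α : ℝ) (c : ℕ) : ℝ[X] :=
  (1 + C α * X) ^ c + C δ * X ^ (c + 1)

theorem coeff_spikedBinomialPoly (δ α : ℝ) (c k : ℕ) :
    (spikedBinomialPoly δ α c).coeff k = c.choose k * α ^ k + if k = c + 1 then δ else 0 := by
  rw [spikedBinomialPoly, coeff_add, coeff_one_add_C_mul_X_pow, coeff_C_mul_X_pow]

theorem eval_spikedBinomialPoly (δ α y : ℝ) (c : ℕ) :
    (spikedBinomialPoly δ α c).eval y = (1 + α * y) ^ c + δ * y ^ (c + 1) := by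
  simp [spikedBinomialPoly]

theorem natDegree_spikedBinomialPoly_le (δ α : ℝ) (c : ℕ) :
    (spikedBinomialPoly δ α c).natDegree ≤ c + 1 := by
  unfold spikedBinomialPoly
  compute_degree

theorem spikedBinomialPoly_sub_mul_mem_nonnegCoeffs {δ α : ℝ} (hδ0 : 0 ≤ δ) (hδ1 : δ ≤ 1)
    (hδα : 2 * δ ≤ α) (hα : 1 ≤ α) (a b : ℕ) :
    spikedBinomialPoly δ α (a + b + 1) - spikedBinomialPoly δ α a * spikedBinomialPoly δ α b
      ∈ nonnegCoeffs ℝ := by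
  set P : ℝ[X] := 1 + C α * X
  have hP : P ∈ nonnegCoeffs ℝ :=
    add_mem (one_mem _) (mul_mem (C_mem_nonnegCoeffs (by linarith)) X_mem_nonnegCoeffs)
  have hPX : P - X ∈ nonnegCoeffs ℝ := by
    have : P - X = 1 + C (α - 1) * X := by simp only [P, C_sub, C_1]; ring
    rw [this]
    exact add_mem (one_mem _) (mul_mem (C_mem_nonnegCoeffs (by linarith)) X_mem_nonnegCoeffs)
  have hPXpow (n : ℕ) : P ^ n - X ^ n ∈ nonnegCoeffs ℝ :=
    (nonnegCoeffs ℝ).pow_sub_pow_mem hPX X_mem_nonnegCoeffs n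
  have key :
      spikedBinomialPoly δ α (a + b + 1) - spikedBinomialPoly δ α a * spikedBinomialPoly δ α b
        = C δ * X * ((P ^ a - X ^ a) * P ^ b + (P ^ b - X ^ b) * P ^ a)
          + C (α - 2 * δ) * X * P ^ (a + b) + C (δ * (1 - δ)) * X ^ (a + b + 2) := by
    simp only [spikedBinomialPoly, P, C_sub, C_mul, C_1, C_ofNat]
    ring
  rw [key]
  have hX := X_mem_nonnegCoeffs (R := ℝ)
  have hδ := C_mem_nonnegCoeffs hδ0
  refine add_mem (add_mem ?_ ?_) ?_
  · exact mul_mem (mul_mem hδ hX) (add_mem (mul_mem (hPXpow a) (pow_mem hP b))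
      (mul_mem (hPXpow b) (pow_mem hP a)))
  · exact mul_mem (mul_mem (C_mem_nonnegCoeffs (by linarith)) hX) (pow_mem hP _)
  · exact mul_mem (C_mem_nonnegCoeffs (mul_nonneg hδ0 (by linarith))) (pow_mem hX _)

theorem coeff_spikedBinomialPoly_pred {δ α : ℝ} {n : ℕ} (hn : 1 ≤ n) (i : ℕ) :
    (spikedBinomialPoly δ α (n - 1)).coeff i =
      if i = n then δ else if i ≤ n - 1 then ((n - 1).choose i : ℝ) * α ^ i else 0 := by
  rw [coeff_spikedBinomialPoly, Nat.sub_add_cancel hn]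
  split_ifs with h₁ h₂
  · simp [h₁, Nat.choose_eq_zero_of_lt (by omega : n - 1 < n)]
  · simp
  · simp [Nat.choose_eq_zero_of_lt (by omega : n - 1 < i)]

theorem coeff_mul_spikedBinomialPoly_le {δ α : ℝ} (hδ0 : 0 ≤ δ) (hδ1 : δ ≤ 1)
    (hδα : 2 * δ ≤ α) (hα : 1 ≤ α) (a b i : ℕ) :
    (spikedBinomialPoly δ α a * spikedBinomialPoly δ α b).coeff i ≤
      (spikedBinomialPoly δ α (a + b + 1)).coeff i := by
  have := mem_nonnegCoeffs.mp (spikedBinomialPoly_sub_mul_mem_nonnegCoeffs hδ0 hδ1 hδα hα a b) i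
  rwa [coeff_sub, sub_nonneg] at this

theorem tendsto_inv_mul_log_of_pow_bounds {s : ℕ → ℝ} {a b r : ℝ} (ha : 0 < a) (hr : 0 < r)
    (hlo : ∀ᶠ n in atTop, a * r ^ n ≤ s n) (hhi : ∀ᶠ n in atTop, s n ≤ b * r ^ n) :
    Tendsto (fun n : ℕ => (1 / (n : ℝ)) * Real.log (s n)) atTop (𝓝 (Real.log r)) := by
  have hb : 0 < b := by
    obtain ⟨n, hlo_n, hhi_n⟩ := (hlo.and hhi).exists
    exact ha.trans_le (le_of_mul_le_mul_right (hlo_n.trans hhi_n) (pow_pos hr n))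
  have hlim (c : ℝ) : Tendsto (fun n : ℕ => c / n + Real.log r) atTop (𝓝 (Real.log r)) := by
    simpa using (tendsto_const_div_atTop_nhds_zero_nat c).add_const (Real.log r)
  have hlog {c : ℝ} (hc : 0 < c) {n : ℕ} (hn : 1 ≤ n) :
      (1 / (n : ℝ)) * Real.log (c * r ^ n) = Real.log c / n + Real.log r := by
    rw [Real.log_mul hc.ne' (pow_pos hr n).ne', Real.log_pow]
    field_simp
  refine tendsto_of_tendsto_of_tendsto_of_le_of_le' (hlim (Real.log a)) (hlim (Real.log b)) ?_ ?_
  · filter_upwards [hlo, eventually_ge_atTop 1] with n hn h1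
    rw [← hlog ha h1]
    gcongr
  · filter_upwards [hlo, hhi, eventually_ge_atTop 1] with n hn hn' h1
    rw [← hlog hb h1]
    gcongr
    exact (by positivity : 0 < a * r ^ n).trans_le hn

theorem ciSup_sub_log_one_add_mul_exp {α : ℝ} (hα : 0 < α) :
    ⨆ t : ℝ, (t - Real.log (1 + α * Real.exp t)) = -Real.log α := by
  have hrewrite (t : ℝ) : t - Real.log (1 + α * Real.exp t) = -Real.log (Real.exp (-t) + α) := by
    have hfact : 1 + α * Real.exp t = Real.exp t * (Real.exp (-t) + α) := by
      rw [mul_add, ← Real.exp_add, add_neg_cancel, Real.exp_zero]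
      ring
    rw [hfact, Real.log_mul (Real.exp_ne_zero t) (by positivity), Real.log_exp]
    ring
  have hmono : Monotone fun t : ℝ => -Real.log (Real.exp (-t) + α) := fun s u h =>
    neg_le_neg (Real.log_le_log (by positivity) (by gcongr))
  have htend : Tendsto (fun t : ℝ => -Real.log (Real.exp (-t) + α)) atTop (𝓝 (-Real.log α)) := by
    have h : Tendsto (fun t : ℝ => Real.exp (-t) + α) atTop (𝓝 α) := by
      simpa using (Real.tendsto_exp_atBot.comp tendsto_neg_atTop_atBot).add_const α
    exact ((Real.continuousAt_log hα.ne').tendsto.comp h).neg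
  simp_rw [hrewrite]
  exact (isLUB_of_tendsto_atTop hmono htend).ciSup_eq

theorem tendsto_inv_mul_log_eval_spikedBinomialPoly {δ α y : ℝ} (hδ : 0 ≤ δ) (hα : 1 ≤ α)
    (hy : 0 < y) :
    Tendsto (fun n : ℕ => (1 / (n : ℝ)) * Real.log ((spikedBinomialPoly δ α (n - 1)).eval y))
      atTop (𝓝 (Real.log (1 + α * y))) := by
  set r := 1 + α * y
  have hr : 1 ≤ r := le_add_of_nonneg_right (by positivity)
  have hyr : y ≤ r := by simp only [r]; nlinarith
  simp_rw [eval_spikedBinomialPoly]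
  refine tendsto_inv_mul_log_of_pow_bounds (a := r⁻¹) (b := 1 + δ) (by positivity) (by positivity)
    ?_ ?_
  · filter_upwards [eventually_ge_atTop 1] with n hn
    rw [← pow_sub_one_mul (by omega : n ≠ 0), mul_comm, mul_assoc, mul_inv_cancel₀ (by positivity),
      mul_one]
    exact le_add_of_nonneg_right (by positivity)
  · filter_upwards [eventually_ge_atTop 1] with n hn
    rw [Nat.sub_add_cancel hn, add_mul, one_mul]
    gcongr
    omega

/-- For `δ ∈ (0,1/2)`, `α > 1`, and
`μ n i = C(n−1,i) αⁱ` for `i ≤ n−1`, `μ n n = δ`: the sequence `(μ n)` is a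
proper super-convolutive sequence, its limit function is
`Λ(t) = log(1 + α eᵗ)`, and `Λ*(1) = −log α < 0 = lim (1/n) log μ n n`,
showing that the endpoint inequality for the conjugate can be strict. -/
theorem strict_inequality_example
    (δ α : ℝ) (hδ : δ ∈ Set.Ioo (0 : ℝ) (1 / 2)) (hα : 1 < α)
    (μ : ℕ → ℕ → ℝ)
    (hμ : ∀ n i : ℕ, 1 ≤ n → μ n i =
      if i = n then δ else if i ≤ n - 1 then ((n - 1).choose i : ℝ) * α ^ i else 0) :
    (∀ n : ℕ, 1 ≤ n → 0 < μ n 0 ∧ 0 < μ n n) ∧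
    (∀ m n : ℕ, 1 ≤ m → 1 ≤ n → ∀ i : ℕ,
      ∑ k ∈ Finset.range (i + 1), μ m k * μ n (i - k) ≤ μ (m + n) i) ∧
    (∀ t : ℝ,
      Tendsto (fun n : ℕ =>
          (1 / (n : ℝ)) * Real.log (∑ j ∈ Finset.range (n + 1), μ n j * Real.exp (j * t)))
        atTop (𝓝 (Real.log (1 + α * Real.exp t)))) ∧
    (⨆ t : ℝ, (t - Real.log (1 + α * Real.exp t))) = -Real.log α ∧
    Tendsto (fun n : ℕ => (1 / (n : ℝ)) * Real.log (μ n n)) atTop (𝓝 0) ∧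
    -Real.log α < 0 := by
  obtain ⟨hδ0, hδ1⟩ := hδ
  have hμM {n : ℕ} (hn : 1 ≤ n) (i : ℕ) : μ n i = (spikedBinomialPoly δ α (n - 1)).coeff i := by
    rw [hμ n i hn, coeff_spikedBinomialPoly_pred hn]
  refine ⟨fun n hn => ?_, fun m n hm hn i => ?_, fun t => ?_,
    ciSup_sub_log_one_add_mul_exp (by linarith), ?_, by simpa using Real.log_pos hα⟩
  · rw [hμ n 0 hn, hμ n n hn, if_neg (by omega), if_pos rfl]
    simp [hδ0]
  · obtain ⟨a, rfl⟩ := Nat.exists_eq_add_of_le' hm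
    obtain ⟨b, rfl⟩ := Nat.exists_eq_add_of_le' hn
    simp_rw [hμM hm, hμM hn, hμM (by omega : 1 ≤ a + 1 + (b + 1)), sum_range_coeff_mul_coeff]
    convert coeff_mul_spikedBinomialPoly_le hδ0.le (by linarith) (by linarith) hα.le a b i
      using 4 <;> omega
  · refine (tendsto_inv_mul_log_eval_spikedBinomialPoly hδ0.le hα.le (Real.exp_pos t)).congr'
      ?_
    filter_upwards [eventually_ge_atTop 1] with n hn
    rw [eval_eq_sum_range' (n := n + 1)
      (by have := natDegree_spikedBinomialPoly_le δ α (n - 1); omega)]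
    simp_rw [hμM hn, Real.exp_nat_mul]
  · refine (tendsto_const_div_atTop_nhds_zero_nat (Real.log δ)).congr' ?_
    filter_upwards [eventually_ge_atTop 1] with n hn
    rw [hμ n n hn, if_pos rfl, one_div_mul_eq_div]
end
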